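/- arXiv:1606.08997 — 5 statements merged into one kernel-verified Lean document; each statement's English description precedes it below -/
import Mathlib

section
/- Let α ≥ 1, β > 1 and let positive constants c11, c12, c13, c14, c31, c32 and N ≥ 1 be given. Let V be a countable set, d : V × V → [0,∞) a function, θ : V → [0,∞) a weight, and fix x ∈ V. Assume: (i) c31·r^α ≤ θ(B(x,r)) ≤ c32·r^α for all r ≥ N; (ii) q : (0,∞) × V → [0,∞) satisfies, for all t ≥ N and all y ∈ V, q(t,y) ≤ (c11/t^{α/β})·exp(−c12·(d(x,y)^β/t)^{1/(β−1)}) whenever t ≥ d(x,y), and q(t,y) ≤ c13·exp(−c14·d(x,y)·max(1, log(d(x,y)/t))) whenever t ≤ d(x,y); (iii) ∑_{y∈V} q(t,y)·θ(y) ≤ 1 for all t ≥ N. Then for every δ ∈ (0, min(c12, c14)) there exist positive constants c1, c2, c3, depending only on δ, α, β and the given constants (not on t, r), such that ∑_{y : d(x,y) ≥ r} q(t,y)·θ(y) ≤ c1·exp(−(c12−δ)·(r/t^{1/β})^{β/(β−1)}) + c2·exp(−c3·t) for all r ≥ N and t ≥ N. -/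
/-!
On `{d(x,y) ≤ t}` write `ρ = d(x,y) / t^{1/β}`: the sub-Gaussian exponent
`(d^β/t)^{1/(β-1)}` equals `ρ^{β/(β-1)}`, which is at least `(r/t^{1/β})^{β/(β-1)}` on the
tail and at least `ρ - 1`. Spending `c12 - δ` of the rate on the first bound and `δ` on the
second leaves the weight `e^{-δ d/ℓ}` with `ℓ = N t^{1/β}`. On `{d(x,y) ≥ t}` the off-diagonal
bound gives `e^{-c14 d} ≤ e^{-c14 t/2} e^{-c14 d/(2N)}`. A sum `∑_y e^{-κ d(x,y)/ℓ} θ(y)` with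
`ℓ ≥ N` is cut into the dyadic shells `2^{j-1}ℓ < d ≤ 2^j ℓ`, whose volumes are at most
`c32 (2^j ℓ)^α`, so it is `O(ℓ^α)`; for `ℓ = N t^{1/β}` this cancels the on-diagonal factor
`t^{-α/β}`.
-/

open Real
open scoped ENNReal

theorem rpow_le_mul_exp {p ε x : ℝ} (hp : 0 < p) (hε : 0 < ε) (hx : 0 ≤ x) :
    x ^ p ≤ (p / ε) ^ p * exp (ε * x) := by
  have hy : 0 ≤ ε * x / p := by positivity
  calc x ^ p = (p / ε) ^ p * (ε * x / p) ^ p := by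
        rw [← mul_rpow (by positivity) hy]; congr 1; field_simp
    _ ≤ (p / ε) ^ p * exp (ε * x / p) ^ p := by
        gcongr; linarith [add_one_le_exp (ε * x / p)]
    _ = (p / ε) ^ p * exp (ε * x) := by
        rw [← exp_mul, div_mul_cancel₀ _ hp.ne']

/-- `(2 ^ j - 1) / 2` is a lower bound of `d / ℓ` on the `j`-th dyadic shell `2^{j-1}ℓ < d ≤ 2^j ℓ`
(the ball `d ≤ ℓ` for `j = 0`). -/
noncomputable def dyadicExpSum (α κ : ℝ) : ℝ :=
  ∑' j : ℕ, ((2 : ℝ) ^ j) ^ α * exp (-κ * ((2 ^ j - 1) / 2))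

theorem summable_dyadicExpSum {α κ : ℝ} (hα : 0 < α) (hκ : 0 < κ) :
    Summable fun j : ℕ => ((2 : ℝ) ^ j) ^ α * exp (-κ * ((2 ^ j - 1) / 2)) := by
  have hgeom : Summable fun j : ℕ => exp (-(κ / 4) * 2 ^ j) :=
    summable_exp_nat_mul_of_ge (by linarith) fun j => by exact_mod_cast (Nat.lt_two_pow_self).le
  refine (hgeom.mul_left ((4 * α / κ) ^ α * exp (κ / 2))).of_nonneg_of_le
    (fun j => by positivity) fun j => ?_
  calc ((2 : ℝ) ^ j) ^ α * exp (-κ * ((2 ^ j - 1) / 2))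
      ≤ (α / (κ / 4)) ^ α * exp (κ / 4 * 2 ^ j) * exp (-κ * ((2 ^ j - 1) / 2)) := by
        gcongr; exact rpow_le_mul_exp hα (by positivity) (by positivity)
    _ = (4 * α / κ) ^ α * exp (κ / 2) * exp (-(κ / 4) * 2 ^ j) := by
        rw [mul_assoc, ← exp_add, mul_assoc, ← exp_add]; ring_nf

theorem dyadicExpSum_pos {α κ : ℝ} (hα : 0 < α) (hκ : 0 < κ) : 0 < dyadicExpSum α κ :=
  (summable_dyadicExpSum hα hκ).tsum_pos (fun j => by positivity) 0 (by positivity)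

theorem ENNReal.tsum_mul_le_tsum_shells {V ι : Type*} (n : V → ι) (b : ι → ℝ≥0∞)
    (w : V → ℝ≥0∞) (s : ι → Set V) (hs : ∀ y, y ∈ s (n y)) :
    ∑' y, b (n y) * w y ≤ ∑' j, b j * ∑' z : s j, w z :=
  calc ∑' y, b (n y) * w y = ∑' j, ∑' y : n ⁻¹' {j}, b (n y) * w y :=
        (ENNReal.tsum_fiberwise _ n).symm
    _ = ∑' j, b j * ∑' y : n ⁻¹' {j}, w y := by
        refine tsum_congr fun j => ?_
        rw [← ENNReal.tsum_mul_left]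
        refine tsum_congr fun y => ?_
        rw [show n y = j from y.2]
    _ ≤ ∑' j, b j * ∑' z : s j, w z := by
        gcongr with j
        exact ENNReal.tsum_mono_subtype w fun y (hy : n y = j) => hy ▸ hs y

theorem tsum_ofReal_exp_mul_le {V : Type*} {ρ : V → ℝ} {w : V → ℝ≥0∞} {α c N ℓ κ : ℝ}
    (hρ : ∀ y, 0 ≤ ρ y) (hα : 0 < α) (hc : 0 ≤ c) (hκ : 0 < κ) (hℓ : 0 < ℓ) (hNℓ : N ≤ ℓ)
    (hvol : ∀ R, N ≤ R → ∑' z : {z // ρ z ≤ R}, w z ≤ ENNReal.ofReal (c * R ^ α)) :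
    ∑' y, ENNReal.ofReal (exp (-κ * (ρ y / ℓ))) * w y ≤
      ENNReal.ofReal (c * dyadicExpSum α κ * ℓ ^ α) := by
  have hcover : ∀ y, ∃ j : ℕ, ρ y ≤ 2 ^ j * ℓ := fun y =>
    (pow_unbounded_of_one_lt (ρ y / ℓ) one_lt_two).imp fun j hj =>
      ((div_lt_iff₀ hℓ).1 hj).le
  let n y := Nat.find (hcover y)
  have hshell : ∀ y, (2 ^ n y - 1) / 2 ≤ ρ y / ℓ := by
    intro y
    rcases h : n y with _ | k
    · simpa using div_nonneg (hρ y) hℓ.le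
    · have hk : 2 ^ k * ℓ < ρ y := not_le.1 (Nat.find_min (hcover y) (by omega : k < n y))
      rw [le_div_iff₀ hℓ, pow_succ]
      nlinarith
  calc ∑' y, ENNReal.ofReal (exp (-κ * (ρ y / ℓ))) * w y
      ≤ ∑' y, ENNReal.ofReal (exp (-κ * ((2 ^ n y - 1) / 2))) * w y := by
        gcongr ∑' y, ENNReal.ofReal (exp ?_) * _ with y
        exact mul_le_mul_of_nonpos_left (hshell y) (by linarith)
    _ ≤ ∑' j : ℕ, ENNReal.ofReal (exp (-κ * ((2 ^ j - 1) / 2))) *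
          ∑' z : {z | ρ z ≤ 2 ^ j * ℓ}, w z :=
        ENNReal.tsum_mul_le_tsum_shells n _ w _ fun y => Nat.find_spec (hcover y)
    _ ≤ ∑' j : ℕ, ENNReal.ofReal (exp (-κ * ((2 ^ j - 1) / 2))) *
          ENNReal.ofReal (c * (2 ^ j * ℓ) ^ α) := by
        gcongr with j
        exact hvol _ (hNℓ.trans (le_mul_of_one_le_left hℓ.le (one_le_pow₀ one_le_two)))
    _ = ∑' j : ℕ, ENNReal.ofReal
          (c * ℓ ^ α * (((2 : ℝ) ^ j) ^ α * exp (-κ * ((2 ^ j - 1) / 2)))) := by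
        refine tsum_congr fun j => ?_
        rw [← ENNReal.ofReal_mul (exp_pos _).le, mul_rpow (by positivity) hℓ.le]
        ring_nf
    _ = ENNReal.ofReal (c * dyadicExpSum α κ * ℓ ^ α) := by
        rw [← ENNReal.ofReal_tsum_of_nonneg (fun j => by positivity)
          ((summable_dyadicExpSum hα hκ).mul_left _), tsum_mul_left, dyadicExpSum]
        ring_nf

theorem summable_and_tsum_le_of_tsum_ofReal_le {ι : Type*} {g : ι → ℝ} {b : ℝ}
    (hg : ∀ i, 0 ≤ g i) (hb : 0 ≤ b) (h : ∑' i, ENNReal.ofReal (g i) ≤ ENNReal.ofReal b) :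
    Summable g ∧ ∑' i, g i ≤ b := by
  have hs : Summable g := by
    simpa only [ENNReal.toReal_ofReal (hg _)] using
      ENNReal.summable_toReal (ne_top_of_le_ne_top ENNReal.ofReal_ne_top h)
  refine ⟨hs, ?_⟩
  rwa [← ENNReal.ofReal_tsum_of_nonneg hg hs, ENNReal.ofReal_le_ofReal_iff hb] at h

theorem tsum_ofReal_le_ofReal_of_pos {ι : Type*} {f : ι → ℝ} {b : ℝ} (hf : ∀ i, 0 ≤ f i)
    (hpos : 0 < ∑' i, f i) (hb : ∑' i, f i ≤ b) :
    ∑' i, ENNReal.ofReal (f i) ≤ ENNReal.ofReal b := by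
  have hs : Summable f := by
    by_contra h
    rw [tsum_eq_zero_of_not_summable h] at hpos
    exact hpos.false
  rw [← ENNReal.ofReal_tsum_of_nonneg hf hs]
  exact ENNReal.ofReal_le_ofReal hb

theorem summable_and_tsum_exp_mul_le {V : Type*} {ρ θ : V → ℝ} {α c N ℓ κ : ℝ}
    (hρ : ∀ y, 0 ≤ ρ y) (hθ : ∀ y, 0 ≤ θ y) (hα : 0 < α) (hc : 0 ≤ c) (hκ : 0 < κ)
    (hℓ : 0 < ℓ) (hNℓ : N ≤ ℓ)
    (hvol : ∀ R, N ≤ R →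
      ∑' z : {z // ρ z ≤ R}, ENNReal.ofReal (θ z) ≤ ENNReal.ofReal (c * R ^ α)) :
    Summable (fun y => exp (-κ * (ρ y / ℓ)) * θ y) ∧
      ∑' y, exp (-κ * (ρ y / ℓ)) * θ y ≤ c * dyadicExpSum α κ * ℓ ^ α := by
  refine summable_and_tsum_le_of_tsum_ofReal_le (fun y => mul_nonneg (exp_pos _).le (hθ y))
    (by have := dyadicExpSum_pos hα hκ; positivity) ?_
  simp only [ENNReal.ofReal_mul (exp_pos _).le]
  exact tsum_ofReal_exp_mul_le hρ hα hc hκ hℓ hNℓ hvol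

theorem sub_one_le_rpow {x γ : ℝ} (hx : 0 ≤ x) (hγ : 1 ≤ γ) : x - 1 ≤ x ^ γ := by
  rcases le_total x 1 with h | h
  · linarith [rpow_nonneg hx γ]
  · linarith [self_le_rpow_of_one_le h hγ]

theorem rpow_div_rpow_one_div {β t D : ℝ} (hβ : 1 < β) (ht : 0 < t) (hD : 0 ≤ D) :
    (D ^ β / t) ^ (1 / (β - 1)) = (D / t ^ (1 / β)) ^ (β / (β - 1)) := by
  have ht' : (t ^ (1 / β)) ^ β = t := by
    rw [← rpow_mul ht.le, one_div_mul_cancel (by linarith), rpow_one]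
  rw [div_eq_mul_one_div β, rpow_mul (div_nonneg hD (by positivity)),
    div_rpow hD (by positivity), ht']

theorem exp_neg_mul_rpow_le {β t r D c δ ℓ : ℝ} (hβ : 1 < β) (ht : 0 < t) (hr : 0 ≤ r)
    (hrD : r ≤ D) (hδ : 0 ≤ δ) (hδc : δ ≤ c) (hℓ : t ^ (1 / β) ≤ ℓ) :
    exp (-c * (D ^ β / t) ^ (1 / (β - 1))) ≤
      exp δ * exp (-(c - δ) * (r / t ^ (1 / β)) ^ (β / (β - 1))) * exp (-δ * (D / ℓ)) := by
  have hD : 0 ≤ D := hr.trans hrD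
  have htβ : 0 < t ^ (1 / β) := by positivity
  have hγ : 1 ≤ β / (β - 1) := by rw [le_div_iff₀ (by linarith)]; linarith
  rw [rpow_div_rpow_one_div hβ ht hD, ← exp_add, ← exp_add, exp_le_exp]
  have hrs : (r / t ^ (1 / β)) ^ (β / (β - 1)) ≤ (D / t ^ (1 / β)) ^ (β / (β - 1)) := by gcongr
  have hρs := sub_one_le_rpow (div_nonneg hD htβ.le) hγ
  have hℓD : D / ℓ ≤ D / t ^ (1 / β) := div_le_div_of_nonneg_left hD htβ hℓ
  nlinarith [mul_le_mul_of_nonneg_left hrs (sub_nonneg.2 hδc), mul_le_mul_of_nonneg_left hρs hδ,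
    mul_le_mul_of_nonneg_left hℓD hδ]

theorem exp_neg_mul_mul_le {c t D M N : ℝ} (hc : 0 ≤ c) (ht : 0 ≤ t) (htD : t ≤ D)
    (hM : 1 ≤ M) (hN : 1 ≤ N) :
    exp (-c * D * M) ≤ exp (-(c / 2) * t) * exp (-(c / 2) * (D / N)) := by
  have hD : 0 ≤ D := ht.trans htD
  have hDN : D / N ≤ D := div_le_self hD hN
  rw [← exp_add, exp_le_exp]
  nlinarith [mul_le_mul_of_nonneg_left hM (mul_nonneg hc hD)]

theorem le_add_of_subGaussian_of_offDiagonal {α β c11 c12 c13 c14 δ N t r D Q : ℝ}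
    (hβ : 1 < β) (hc11 : 0 ≤ c11) (hc13 : 0 ≤ c13) (hc14 : 0 ≤ c14) (hδ : 0 ≤ δ) (hδc : δ ≤ c12)
    (hN : 1 ≤ N) (ht : 0 < t) (hr : 0 ≤ r) (hrD : r ≤ D)
    (h₁ : D ≤ t → Q ≤ c11 / t ^ (α / β) * exp (-c12 * (D ^ β / t) ^ (1 / (β - 1))))
    (h₂ : t ≤ D → Q ≤ c13 * exp (-c14 * D * max 1 (log (D / t)))) :
    Q ≤ c11 / t ^ (α / β) * exp δ * exp (-(c12 - δ) * (r / t ^ (1 / β)) ^ (β / (β - 1))) *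
          exp (-δ * (D / (N * t ^ (1 / β)))) +
        c13 * exp (-(c14 / 2) * t) * exp (-(c14 / 2) * (D / N)) := by
  rcases le_total D t with hDt | htD
  · refine le_add_of_le_of_nonneg ((h₁ hDt).trans ?_) (by positivity)
    rw [mul_assoc _ (exp δ), mul_assoc]
    gcongr
    exact exp_neg_mul_rpow_le hβ ht hr hrD hδ hδc (le_mul_of_one_le_left (by positivity) hN)
  · refine le_add_of_nonneg_of_le (by positivity) ((h₂ htD).trans ?_)
    exact (mul_le_mul_of_nonneg_left (exp_neg_mul_mul_le hc14 ht.le htD (le_max_left _ _) hN)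
      hc13).trans_eq (mul_assoc _ _ _).symm

theorem tsum_subtype_le_mul_add_mul {ι : Type*} {p : ι → Prop} {f g₁ g₂ : ι → ℝ}
    {A₁ A₂ B₁ B₂ : ℝ} (hA₁ : 0 ≤ A₁) (hA₂ : 0 ≤ A₂) (hf : ∀ i, p i → 0 ≤ f i)
    (hg₁ : ∀ i, 0 ≤ g₁ i) (hg₂ : ∀ i, 0 ≤ g₂ i)
    (hfg : ∀ i, p i → f i ≤ A₁ * g₁ i + A₂ * g₂ i)
    (hB₁ : Summable g₁ ∧ ∑' i, g₁ i ≤ B₁) (hB₂ : Summable g₂ ∧ ∑' i, g₂ i ≤ B₂) :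
    ∑' i : {i // p i}, f i ≤ A₁ * B₁ + A₂ * B₂ := by
  have hg : Summable fun i => A₁ * g₁ i + A₂ * g₂ i :=
    (hB₁.1.mul_left A₁).add (hB₂.1.mul_left A₂)
  have hg' : Summable fun i : {i // p i} => A₁ * g₁ i + A₂ * g₂ i := hg.subtype {i | p i}
  calc ∑' i : {i // p i}, f i ≤ ∑' i : {i // p i}, (A₁ * g₁ i + A₂ * g₂ i) :=
        Summable.tsum_le_tsum (fun i => hfg i i.2)
          (hg'.of_nonneg_of_le (fun i => hf i i.2) fun i => hfg i i.2) hg'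
    _ ≤ ∑' i, (A₁ * g₁ i + A₂ * g₂ i) :=
        hg.tsum_subtype_le _ {i | p i} fun i => by have := hg₁ i; have := hg₂ i; positivity
    _ = A₁ * ∑' i, g₁ i + A₂ * ∑' i, g₂ i := by
        rw [(hB₁.1.mul_left A₁).tsum_add (hB₂.1.mul_left A₂), tsum_mul_left, tsum_mul_left]
    _ ≤ A₁ * B₁ + A₂ * B₂ := by gcongr <;> [exact hB₁.2; exact hB₂.2]

theorem stmt0_general (α β : ℝ) (hα : 1 ≤ α) (hβ : 1 < β)
    (c11 c12 c13 c14 c31 c32 N : ℝ)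
    (hc11 : 0 < c11) (hc13 : 0 < c13) (hc14 : 0 < c14)
    (hc31 : 0 < c31) (hc32 : 0 < c32) (hN : 1 ≤ N)
    (V : Type*) (d : V → V → ℝ) (hd : ∀ y z : V, 0 ≤ d y z)
    (θ : V → ℝ) (hθ : ∀ y : V, 0 ≤ θ y) (x : V)
    (q : ℝ → V → ℝ) (hq : ∀ (t : ℝ) (y : V), 0 < t → 0 ≤ q t y)
    (hvol : ∀ r : ℝ, N ≤ r →
      c31 * r ^ α ≤ (∑' y : {y : V // d x y ≤ r}, θ y.1) ∧
      (∑' y : {y : V // d x y ≤ r}, θ y.1) ≤ c32 * r ^ α)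
    (hub1 : ∀ (t : ℝ) (y : V), N ≤ t → d x y ≤ t →
      q t y ≤ c11 / t ^ (α / β) *
        Real.exp (-c12 * (d x y ^ β / t) ^ (1 / (β - 1))))
    (hub2 : ∀ (t : ℝ) (y : V), N ≤ t → t ≤ d x y →
      q t y ≤ c13 * Real.exp (-c14 * d x y * max 1 (Real.log (d x y / t)))) :
    ∀ δ : ℝ, 0 < δ → δ < min c12 c14 →
      ∃ c1 c2 c3 : ℝ, 0 < c1 ∧ 0 < c2 ∧ 0 < c3 ∧
        ∀ r t : ℝ, N ≤ r → N ≤ t →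
          (∑' y : {y : V // r ≤ d x y}, q t y.1 * θ y.1) ≤
            c1 * Real.exp (-(c12 - δ) * (r / t ^ (1 / β)) ^ (β / (β - 1))) +
            c2 * Real.exp (-c3 * t) := by
  intro δ hδ hδc
  have hα0 : 0 < α := by linarith
  have hball : ∀ R, N ≤ R →
      ∑' z : {z // d x z ≤ R}, ENNReal.ofReal (θ z) ≤ ENNReal.ofReal (c32 * R ^ α) :=
    fun R hR => tsum_ofReal_le_ofReal_of_pos (fun z => hθ z)
      ((hvol R hR).1.trans_lt' (mul_pos hc31 (rpow_pos_of_pos (by linarith) _))) (hvol R hR).2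
  have hD₁ := dyadicExpSum_pos hα0 hδ
  have hD₂ := dyadicExpSum_pos hα0 (half_pos hc14)
  refine ⟨c11 * exp δ * c32 * dyadicExpSum α δ * N ^ α,
    c13 * c32 * dyadicExpSum α (c14 / 2) * N ^ α, c14 / 2,
    by positivity, by positivity, half_pos hc14, fun r t hr ht => ?_⟩
  have ht0 : 0 < t := by linarith
  have hNℓ : N ≤ N * t ^ (1 / β) :=
    le_mul_of_one_le_right (by linarith) (one_le_rpow (by linarith) (by positivity))
  have hnear := summable_and_tsum_exp_mul_le (hd x) hθ hα0 hc32.le hδ (by positivity) hNℓ hball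
  have hfar := summable_and_tsum_exp_mul_le (hd x) hθ hα0 hc32.le (half_pos hc14)
    (by positivity) le_rfl hball
  refine (tsum_subtype_le_mul_add_mul
    (A₁ := c11 / t ^ (α / β) * exp δ * exp (-(c12 - δ) * (r / t ^ (1 / β)) ^ (β / (β - 1))))
    (A₂ := c13 * exp (-(c14 / 2) * t)) (by positivity) (by positivity)
    (fun y _ => mul_nonneg (hq t y ht0) (hθ y))
    (fun y => mul_nonneg (exp_pos _).le (hθ y)) (fun y => mul_nonneg (exp_pos _).le (hθ y))
    (fun y hy => ?_) hnear hfar).trans_eq ?_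
  · have hqy := le_add_of_subGaussian_of_offDiagonal hβ hc11.le hc13.le hc14.le hδ.le
      (hδc.le.trans (min_le_left _ _)) hN ht0 (by linarith) hy (hub1 t y ht) (hub2 t y ht)
    exact (mul_le_mul_of_nonneg_right hqy (hθ y)).trans_eq (by ring)
  · rw [mul_rpow (by linarith) (by positivity), ← rpow_mul ht0.le, one_div_mul_eq_div]
    field_simp

/-- Tail estimate for the heat kernel (Lemma 2.1 of the paper, single fixed centre form). -/
theorem stmt0 (α β : ℝ) (hα : 1 ≤ α) (hβ : 1 < β)
    (c11 c12 c13 c14 c31 c32 N : ℝ)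
    (hc11 : 0 < c11) (hc12 : 0 < c12) (hc13 : 0 < c13) (hc14 : 0 < c14)
    (hc31 : 0 < c31) (hc32 : 0 < c32) (hN : 1 ≤ N)
    (V : Type*) [Countable V] (d : V → V → ℝ) (hd : ∀ y z : V, 0 ≤ d y z)
    (θ : V → ℝ) (hθ : ∀ y : V, 0 ≤ θ y) (x : V)
    (q : ℝ → V → ℝ) (hq : ∀ (t : ℝ) (y : V), 0 < t → 0 ≤ q t y)
    (hvol : ∀ r : ℝ, N ≤ r →
      c31 * r ^ α ≤ (∑' y : {y : V // d x y ≤ r}, θ y.1) ∧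
      (∑' y : {y : V // d x y ≤ r}, θ y.1) ≤ c32 * r ^ α)
    (hub1 : ∀ (t : ℝ) (y : V), N ≤ t → d x y ≤ t →
      q t y ≤ c11 / t ^ (α / β) *
        Real.exp (-c12 * (d x y ^ β / t) ^ (1 / (β - 1))))
    (hub2 : ∀ (t : ℝ) (y : V), N ≤ t → t ≤ d x y →
      q t y ≤ c13 * Real.exp (-c14 * d x y * max 1 (Real.log (d x y / t))))
    (hmass : ∀ t : ℝ, N ≤ t → (∑' y : V, q t y * θ y) ≤ 1) :
    ∀ δ : ℝ, 0 < δ → δ < min c12 c14 →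
      ∃ c1 c2 c3 : ℝ, 0 < c1 ∧ 0 < c2 ∧ 0 < c3 ∧
        ∀ r t : ℝ, N ≤ r → N ≤ t →
          (∑' y : {y : V // r ≤ d x y}, q t y.1 * θ y.1) ≤
            c1 * Real.exp (-(c12 - δ) * (r / t ^ (1 / β)) ^ (β / (β - 1))) +
            c2 * Real.exp (-c3 * t) :=
  stmt0_general α β hα hβ c11 c12 c13 c14 c31 c32 N hc11 hc13 hc14 hc31 hc32 hN V d hd θ hθ x q hq
    hvol hub1 hub2
end

section
/- Let 1 < β < α, and let positive constants C1, C2, C3, C4, λ1, λ2, λ3, λ4 and c43 be given. Let D ≥ 1 and N with 1 ≤ N ≤ D, and let q : (0,∞) → [0,∞) be a measurable function satisfying: q(t) ≤ C1·exp(−λ1·D·max(1, log(D/t))) for 0 < t ≤ min(c43·D, N); q(t) ≤ C2·exp(−λ2·D²/t) for min(c43·D, N) ≤ t ≤ N; q(t) ≤ C3·exp(−λ3·D) for N ≤ t ≤ D; and q(t) ≤ C4·t^{−α/β}·exp(−λ4·(D^β/t)^{1/(β−1)}) for t ≥ D. Then ∫₀^∞ q(t) dt ≤ C·D^{−(α−β)},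 where C > 0 depends only on α, β and the listed constants (not on D or N). -/
open MeasureTheory

/-- Polynomial times decaying exponential is bounded on `[1, ∞)`. -/
lemma stmt5_aux_exp_poly (μ p : ℝ) (hμ : 0 < μ) :
    ∃ A : ℝ, 0 < A ∧ ∀ x : ℝ, 1 ≤ x → x ^ p * Real.exp (-(μ * x)) ≤ A := by
  refine ⟨(Nat.factorial (Nat.ceil p)) / μ ^ (Nat.ceil p), by positivity, fun x hx => ?_⟩
  set n := Nat.ceil p with hn
  have hx0 : (0:ℝ) < x := lt_of_lt_of_le one_pos hx
  have h1 : x ^ p ≤ x ^ (n : ℝ) := Real.rpow_le_rpow_of_exponent_le hx (Nat.le_ceil p)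
  have hpos : (0:ℝ) < (μ * x) ^ n := by positivity
  have h2 : Real.exp (-(μ * x)) ≤ (Nat.factorial n) / (μ * x) ^ n := by
    have h := Real.pow_div_factorial_le_exp (x := μ * x) (le_of_lt (mul_pos hμ hx0)) n
    rw [div_le_iff₀ (by positivity : (0:ℝ) < (Nat.factorial n : ℝ))] at h
    rw [Real.exp_neg, le_div_iff₀ hpos]
    calc (Real.exp (μ * x))⁻¹ * (μ * x) ^ n
        ≤ (Real.exp (μ * x))⁻¹ * (Real.exp (μ * x) * (Nat.factorial n)) :=
          mul_le_mul_of_nonneg_left h (by positivity)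
      _ = (Nat.factorial n) := by
          rw [← mul_assoc, inv_mul_cancel₀ (Real.exp_pos _).ne', one_mul]
  calc x ^ p * Real.exp (-(μ * x)) ≤ x ^ (n : ℝ) * ((Nat.factorial n) / (μ * x) ^ n) :=
        mul_le_mul h1 h2 (le_of_lt (Real.exp_pos _)) (Real.rpow_nonneg hx0.le _)
    _ = (Nat.factorial n) / μ ^ n := by
        rw [Real.rpow_natCast, mul_pow]
        field_simp

/-- Upper bound of Proposition 2.7 of the paper (single-pair form): the Green function
∫₀^∞ q(t) dt is bounded by C·D^{−(α−β)}. -/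
theorem stmt5 (α β : ℝ) (hβ : 1 < β) (hβα : β < α)
    (C1 C2 C3 C4 l1 l2 l3 l4 c43 : ℝ)
    (hC1 : 0 < C1) (hC2 : 0 < C2) (hC3 : 0 < C3) (hC4 : 0 < C4)
    (hl1 : 0 < l1) (hl2 : 0 < l2) (hl3 : 0 < l3) (hl4 : 0 < l4) (hc43 : 0 < c43) :
    ∃ C : ℝ, 0 < C ∧ ∀ D N : ℝ, 1 ≤ D → 1 ≤ N → N ≤ D →
      ∀ q : ℝ → ℝ, Measurable q → (∀ t : ℝ, 0 < t → 0 ≤ q t) →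
      (∀ t : ℝ, 0 < t → t ≤ min (c43 * D) N →
        q t ≤ C1 * Real.exp (-l1 * D * max 1 (Real.log (D / t)))) →
      (∀ t : ℝ, min (c43 * D) N ≤ t → t ≤ N →
        q t ≤ C2 * Real.exp (-l2 * D ^ 2 / t)) →
      (∀ t : ℝ, N ≤ t → t ≤ D → q t ≤ C3 * Real.exp (-l3 * D)) →
      (∀ t : ℝ, D ≤ t →
        q t ≤ C4 * t ^ (-(α / β)) * Real.exp (-l4 * (D ^ β / t) ^ (1 / (β - 1)))) →
      (∫⁻ t in Set.Ioi (0 : ℝ), ENNReal.ofReal (q t)) ≤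
        ENNReal.ofReal (C * D ^ (-(α - β))) := by
  have hβ0 : (0:ℝ) < β := by linarith
  have hαβ : (0:ℝ) < α - β := by linarith
  have hβ1 : (0:ℝ) < β - 1 := by linarith
  set lam : ℝ := min l1 (min l2 l3) with hlam
  have hlam0 : 0 < lam := lt_min hl1 (lt_min hl2 hl3)
  obtain ⟨A1, hA1, hA1b⟩ := stmt5_aux_exp_poly lam (1 + α - β) hlam0
  obtain ⟨A2, hA2, hA2b⟩ := stmt5_aux_exp_poly l4 ((α / β) * (β - 1)) hl4
  set K : ℝ := max C1 (max C2 C3) with hK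
  have hK0 : 0 < K := lt_of_lt_of_le hC1 (le_max_left _ _)
  refine ⟨K * A1 + C4 * A2 + C4 * (β / (α - β)), by positivity, ?_⟩
  intro D N hD hN hND q hq hq0 H1 H2 H3 H4
  have hD0 : (0:ℝ) < D := lt_of_lt_of_le one_pos hD
  have hDβ : D ≤ D ^ β := by
    calc D = D ^ (1:ℝ) := (Real.rpow_one D).symm
      _ ≤ D ^ β := Real.rpow_le_rpow_of_exponent_le hD hβ.le
  have hDβ0 : (0:ℝ) < D ^ β := Real.rpow_pos_of_pos hD0 β
  -- pointwise bound on (0, D]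
  have hpt1 : ∀ t ∈ Set.Ioc (0:ℝ) D, q t ≤ K * Real.exp (-(lam * D)) := by
    rintro t ⟨ht0, htD⟩
    by_cases h : t ≤ min (c43 * D) N
    · refine (H1 t ht0 h).trans (mul_le_mul (le_max_left _ _) (Real.exp_le_exp.mpr ?_)
        (Real.exp_pos _).le hK0.le)
      have hm : (1:ℝ) ≤ max 1 (Real.log (D / t)) := le_max_left _ _
      have hl : lam ≤ l1 := min_le_left _ _
      have ha1 : lam * D ≤ l1 * D := mul_le_mul_of_nonneg_right hl hD0.le
      have ha2 : l1 * D * 1 ≤ l1 * D * max 1 (Real.log (D / t)) :=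
        mul_le_mul_of_nonneg_left hm (by positivity)
      linarith
    · push_neg at h
      by_cases h2 : t ≤ N
      · refine (H2 t h.le h2).trans (mul_le_mul ((le_max_right C1 (max C2 C3)).trans'
          (le_max_left C2 C3)) (Real.exp_le_exp.mpr ?_) (Real.exp_pos _).le hK0.le)
        have hl : lam ≤ l2 := (min_le_right _ _).trans (min_le_left _ _)
        rw [div_le_iff₀ ht0]
        have htD' : t ≤ D := le_trans h2 hND
        have ha1 : lam * D * t ≤ l2 * D * t := by
          have := mul_le_mul_of_nonneg_right hl hD0.le
          exact mul_le_mul_of_nonneg_right this ht0.le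
        have ha2 : l2 * D * t ≤ l2 * D * D := mul_le_mul_of_nonneg_left htD' (by positivity)
        nlinarith
      · push_neg at h2
        refine (H3 t h2.le htD).trans (mul_le_mul ((le_max_right C1 (max C2 C3)).trans'
          (le_max_right C2 C3)) (Real.exp_le_exp.mpr ?_) (Real.exp_pos _).le hK0.le)
        have hl : lam ≤ l3 := (min_le_right _ _).trans (min_le_right _ _)
        nlinarith
  -- pointwise bound on (D, D^β]
  have hpt2 : ∀ t ∈ Set.Ioc D (D ^ β), q t ≤ C4 * A2 * D ^ (-α) := by
    rintro t ⟨htD, htDβ⟩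
    have ht0 : (0:ℝ) < t := hD0.trans htD
    set u : ℝ := D ^ β / t with hu
    have hu0 : (0:ℝ) < u := div_pos hDβ0 ht0
    have hu1 : (1:ℝ) ≤ u := (one_le_div ht0).mpr htDβ
    have hv1 : (1:ℝ) ≤ u ^ (1 / (β - 1)) := by
      calc (1:ℝ) = (1:ℝ) ^ (1 / (β - 1)) := (Real.one_rpow _).symm
        _ ≤ u ^ (1 / (β - 1)) := Real.rpow_le_rpow zero_le_one hu1 (by positivity)
    have hA := hA2b (u ^ (1 / (β - 1))) hv1
    have hiso : (u ^ (1 / (β - 1))) ^ ((α / β) * (β - 1)) = u ^ (α / β) := by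
      rw [← Real.rpow_mul hu0.le]
      congr 1
      field_simp
    rw [hiso] at hA
    have huαβ : (0:ℝ) < u ^ (α / β) := Real.rpow_pos_of_pos hu0 _
    have hexp : Real.exp (-(l4 * u ^ (1 / (β - 1)))) ≤ A2 * u ^ (-(α / β)) := by
      have h' : Real.exp (-(l4 * u ^ (1 / (β - 1)))) ≤ A2 / u ^ (α / β) :=
        (le_div_iff₀ huαβ).mpr (by rw [mul_comm]; exact hA)
      calc Real.exp (-(l4 * u ^ (1 / (β - 1)))) ≤ A2 / u ^ (α / β) := h'
        _ = A2 * u ^ (-(α / β)) := by rw [Real.rpow_neg hu0.le, div_eq_mul_inv]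
    have hq4 := H4 t htD.le
    rw [neg_mul l4] at hq4
    have htα : (0:ℝ) ≤ t ^ (-(α / β)) := Real.rpow_nonneg ht0.le _
    calc q t ≤ C4 * t ^ (-(α / β)) * Real.exp (-(l4 * u ^ (1 / (β - 1)))) := hq4
      _ ≤ C4 * t ^ (-(α / β)) * (A2 * u ^ (-(α / β))) :=
          mul_le_mul_of_nonneg_left hexp (by positivity)
      _ = C4 * A2 * (t ^ (-(α / β)) * u ^ (-(α / β))) := by ring
      _ = C4 * A2 * D ^ (-α) := by
          rw [← Real.mul_rpow ht0.le hu0.le]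
          have htu : t * u = D ^ β := by
            rw [hu]; field_simp
          rw [htu, ← Real.rpow_mul hD0.le]
          congr 2
          field_simp
  -- split the integral
  have hsplit1 : Set.Ioi (0:ℝ) = Set.Ioc 0 D ∪ Set.Ioi D := (Set.Ioc_union_Ioi_eq_Ioi hD0.le).symm
  have hsplit2 : Set.Ioi D = Set.Ioc D (D ^ β) ∪ Set.Ioi (D ^ β) :=
    (Set.Ioc_union_Ioi_eq_Ioi hDβ).symm
  rw [hsplit1, lintegral_union measurableSet_Ioi Set.Ioc_disjoint_Ioi_same, hsplit2,
    lintegral_union measurableSet_Ioi Set.Ioc_disjoint_Ioi_same]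
  -- bound the three pieces
  have hb1 : (∫⁻ t in Set.Ioc (0:ℝ) D, ENNReal.ofReal (q t)) ≤
      ENNReal.ofReal (K * Real.exp (-(lam * D)) * D) := by
    calc (∫⁻ t in Set.Ioc (0:ℝ) D, ENNReal.ofReal (q t))
        ≤ ∫⁻ _ in Set.Ioc (0:ℝ) D, ENNReal.ofReal (K * Real.exp (-(lam * D))) :=
          setLIntegral_mono' measurableSet_Ioc fun t ht =>
            ENNReal.ofReal_le_ofReal (hpt1 t ht)
      _ = ENNReal.ofReal (K * Real.exp (-(lam * D))) * volume (Set.Ioc (0:ℝ) D) :=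
          setLIntegral_const _ _
      _ = ENNReal.ofReal (K * Real.exp (-(lam * D)) * D) := by
          rw [Real.volume_Ioc, sub_zero, ← ENNReal.ofReal_mul (by positivity)]
  have hb2 : (∫⁻ t in Set.Ioc D (D ^ β), ENNReal.ofReal (q t)) ≤
      ENNReal.ofReal (C4 * A2 * D ^ (-α) * D ^ β) := by
    calc (∫⁻ t in Set.Ioc D (D ^ β), ENNReal.ofReal (q t))
        ≤ ∫⁻ _ in Set.Ioc D (D ^ β), ENNReal.ofReal (C4 * A2 * D ^ (-α)) :=
          setLIntegral_mono' measurableSet_Ioc fun t ht =>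
            ENNReal.ofReal_le_ofReal (hpt2 t ht)
      _ = ENNReal.ofReal (C4 * A2 * D ^ (-α)) * volume (Set.Ioc D (D ^ β)) :=
          setLIntegral_const _ _
      _ = ENNReal.ofReal (C4 * A2 * D ^ (-α)) * ENNReal.ofReal (D ^ β - D) := by
          rw [Real.volume_Ioc]
      _ ≤ ENNReal.ofReal (C4 * A2 * D ^ (-α)) * ENNReal.ofReal (D ^ β) :=
          mul_le_mul_right (ENNReal.ofReal_le_ofReal (by linarith)) _
      _ = ENNReal.ofReal (C4 * A2 * D ^ (-α) * D ^ β) := by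
          rw [← ENNReal.ofReal_mul (by positivity)]
  have ha : -(α / β) < -1 := by
    rw [neg_lt_neg_iff]
    exact (one_lt_div hβ0).mpr hβα
  have hint : IntegrableOn (fun t : ℝ => C4 * t ^ (-(α / β))) (Set.Ioi (D ^ β)) :=
    (integrableOn_Ioi_rpow_of_lt ha hDβ0).const_mul C4
  have hb3 : (∫⁻ t in Set.Ioi (D ^ β), ENNReal.ofReal (q t)) ≤
      ENNReal.ofReal (C4 * (β / (α - β)) * D ^ (β - α)) := by
    have hmono : (∫⁻ t in Set.Ioi (D ^ β), ENNReal.ofReal (q t)) ≤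
        ∫⁻ t in Set.Ioi (D ^ β), ENNReal.ofReal (C4 * t ^ (-(α / β))) := by
      refine setLIntegral_mono' measurableSet_Ioi fun t ht => ENNReal.ofReal_le_ofReal ?_
      have htD : D ≤ t := le_trans hDβ (le_of_lt ht)
      calc q t ≤ C4 * t ^ (-(α / β)) * Real.exp (-l4 * (D ^ β / t) ^ (1 / (β - 1))) := H4 t htD
        _ ≤ C4 * t ^ (-(α / β)) * 1 := by
            refine mul_le_mul_of_nonneg_left (Real.exp_le_one_iff.mpr ?_) ?_
            · have ht0 : (0:ℝ) < t := hD0.trans_le htD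
              have : (0:ℝ) ≤ (D ^ β / t) ^ (1 / (β - 1)) :=
                Real.rpow_nonneg (by positivity) _
              nlinarith
            · have ht0 : (0:ℝ) < t := hD0.trans_le htD
              positivity
        _ = C4 * t ^ (-(α / β)) := mul_one _
    refine hmono.trans ?_
    have heq : (∫⁻ t in Set.Ioi (D ^ β), ENNReal.ofReal (C4 * t ^ (-(α / β)))) =
        ENNReal.ofReal (∫ t in Set.Ioi (D ^ β), C4 * t ^ (-(α / β))) := by
      rw [MeasureTheory.ofReal_integral_eq_lintegral_ofReal hint ?_]
      filter_upwards [self_mem_ae_restrict (measurableSet_Ioi :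
        MeasurableSet (Set.Ioi (D ^ β)))] with t ht
      have ht0 : (0:ℝ) < t := hDβ0.trans ht
      positivity
    rw [heq]
    apply ENNReal.ofReal_le_ofReal
    rw [MeasureTheory.integral_const_mul, integral_Ioi_rpow_of_lt ha hDβ0]
    have hc : (D ^ β) ^ (-(α / β) + 1) = D ^ (β - α) := by
      rw [← Real.rpow_mul hD0.le]
      congr 1
      field_simp
      ring
    rw [hc]
    have h1 : -(α / β) + 1 = -((α - β) / β) := by field_simp; ring
    rw [h1]
    rw [div_neg, neg_div, neg_neg]
    have : D ^ (β - α) / ((α - β) / β) = β / (α - β) * D ^ (β - α) := by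
      field_simp
    rw [this, ← mul_assoc]
  -- combine
  have hfin1 : K * Real.exp (-(lam * D)) * D ≤ K * A1 * D ^ (β - α) := by
    have h := hA1b D hD
    have hpos : (0:ℝ) < D ^ (β - α) := Real.rpow_pos_of_pos hD0 _
    have hDid : D ^ (1 + α - β) * D ^ (β - α) = D := by
      rw [← Real.rpow_add hD0, show 1 + α - β + (β - α) = 1 by ring, Real.rpow_one]
    have h2 : D ^ (1 + α - β) * Real.exp (-(lam * D)) * D ^ (β - α) =
        Real.exp (-(lam * D)) * D := by
      rw [mul_comm (D ^ (1 + α - β)) (Real.exp (-(lam * D))), mul_assoc, hDid]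
    have h3 : Real.exp (-(lam * D)) * D ≤ A1 * D ^ (β - α) := by
      rw [← h2]
      exact mul_le_mul_of_nonneg_right h hpos.le
    calc K * Real.exp (-(lam * D)) * D = K * (Real.exp (-(lam * D)) * D) := by ring
      _ ≤ K * (A1 * D ^ (β - α)) := mul_le_mul_of_nonneg_left h3 hK0.le
      _ = K * A1 * D ^ (β - α) := by ring
  have hfin2 : C4 * A2 * D ^ (-α) * D ^ β = C4 * A2 * D ^ (β - α) := by
    rw [mul_assoc, ← Real.rpow_add hD0, neg_add_eq_sub α β]
  have hgoal : ENNReal.ofReal (K * A1 * D ^ (β - α)) +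
      ENNReal.ofReal (C4 * A2 * D ^ (β - α)) +
      ENNReal.ofReal (C4 * (β / (α - β)) * D ^ (β - α)) =
      ENNReal.ofReal ((K * A1 + C4 * A2 + C4 * (β / (α - β))) * D ^ (-(α - β))) := by
    have hpos : (0:ℝ) < D ^ (β - α) := Real.rpow_pos_of_pos hD0 _
    rw [← ENNReal.ofReal_add (by positivity) (by positivity),
      ← ENNReal.ofReal_add (by positivity) (by positivity)]
    congr 1
    rw [show -(α - β) = β - α by ring]
    ring
  calc (∫⁻ t in Set.Ioc (0:ℝ) D, ENNReal.ofReal (q t)) +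
      ((∫⁻ t in Set.Ioc D (D ^ β), ENNReal.ofReal (q t)) +
        (∫⁻ t in Set.Ioi (D ^ β), ENNReal.ofReal (q t)))
      ≤ ENNReal.ofReal (K * A1 * D ^ (β - α)) +
        (ENNReal.ofReal (C4 * A2 * D ^ (β - α)) +
          ENNReal.ofReal (C4 * (β / (α - β)) * D ^ (β - α))) := by
        refine add_le_add (hb1.trans (ENNReal.ofReal_le_ofReal hfin1))
          (add_le_add (hb2.trans ?_) hb3)
        rw [hfin2]
    _ = ENNReal.ofReal ((K * A1 + C4 * A2 + C4 * (β / (α - β))) * D ^ (-(α - β))) := by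
        rw [← hgoal, add_assoc]
end

section
/- Let α ≥ 1, β > 0 and c2 > 0. Let (Ω, F, ℙ) be a probability space, V a countable set, d : V × V → [0,∞) a function such that #B(x,r) ≤ c2·r^α for all x ∈ V and r ≥ 1, and fix x ∈ V. Let {N_y}_{y∈V} be nonnegative random variables on Ω and f : (0,∞) → [0,1] a nonincreasing function with ℙ(N_y ≥ t) ≤ f(t) for all y ∈ V and t > 0. Assume ∑_{n≥1} n^α·f(n) < ∞. Then for all γ1, γ2 > 0, q > 1 and C > 0, setting φ(s) = C·s^{1/β}·(log log s)^{1−1/β}, for ℙ-almost every ω there exists L = L(ω) such that for all n ≥ L: (a) N_y(ω) ≤ γ1·q^{n/β} for every y with d(x,y) ≤ γ2·q^{n/β}, and (b) N_y(ω) ≤ γ1·φ(q^n) for every y with d(x,y) ≤ γ2·φ(q^n). -/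
open MeasureTheory Filter
open scoped ENNReal NNReal


lemma geom_dom {Q : ℝ} (hQ : 1 < Q) (k : ℕ) (c : ℝ) :
    ∀ᶠ n : ℕ in atTop, c * (n : ℝ) ^ k ≤ Q ^ n := by
  have h := tendsto_pow_const_div_const_pow_of_one_lt k hQ
  have hc : (0:ℝ) < (|c| + 1)⁻¹ := by positivity
  filter_upwards [h.eventually_lt_const hc] with n hn
  have hQn : (0:ℝ) < Q ^ n := pow_pos (by linarith) n
  have hnk : (0:ℝ) ≤ (n:ℝ) ^ k := by positivity
  have h2 : (n:ℝ) ^ k < (|c| + 1)⁻¹ * Q ^ n := (div_lt_iff₀ hQn).mp hn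
  have h3 : c ≤ |c| + 1 := by
    have := le_abs_self c; linarith
  have hca : (0:ℝ) < |c| + 1 := by positivity
  have h5 := mul_lt_mul_of_pos_left h2 hca
  rw [← mul_assoc, mul_inv_cancel₀ (ne_of_gt hca), one_mul] at h5
  have h6 := mul_le_mul_of_nonneg_right h3 hnk
  linarith

lemma f_poly (α : ℝ) (hα : 1 ≤ α) (f : ℝ → ℝ) (hf0 : ∀ t : ℝ, 0 < t → 0 ≤ f t)
    (hfmono : ∀ s t : ℝ, 0 < s → s ≤ t → f t ≤ f s)
    (hsum : Summable (fun n : ℕ => ((n : ℝ) + 1) ^ α * f ((n : ℝ) + 1))) :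
    ∃ M : ℝ, 0 < M ∧ ∀ t : ℝ, 4 ≤ t → f t ≤ M * t ^ (-(α + 1)) := by
  have hα0 : (0:ℝ) ≤ α := by linarith
  set a : ℕ → ℝ := fun n => ((n : ℝ) + 1) ^ α * f ((n : ℝ) + 1) with ha
  have hanonneg : ∀ n, 0 ≤ a n := fun n =>
    mul_nonneg (Real.rpow_nonneg (by positivity) _) (hf0 _ (by positivity))
  set S := ∑' n, a n with hS
  have hS0 : 0 ≤ S := tsum_nonneg hanonneg
  refine ⟨(S + 1) * (4:ℝ) ^ (α + 1), by positivity, fun t ht => ?_⟩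
  have ht0 : (0:ℝ) < t := by linarith
  set n := ⌊t⌋₊ with hn
  set m := n / 2 with hm
  have hn4 : 4 ≤ n := Nat.le_floor (by exact_mod_cast ht)
  have hnt : (n:ℝ) ≤ t := Nat.floor_le ht0.le
  have htn : t < (n:ℝ) + 1 := Nat.lt_floor_add_one t
  -- key sum bound
  have key : ((n - m : ℕ) : ℝ) * ((m:ℝ) + 1) ^ α * f t ≤ S := by
    have hterm : ∀ k ∈ Finset.Ico m n, ((m:ℝ) + 1) ^ α * f t ≤ a k := by
      intro k hk
      rw [Finset.mem_Ico] at hk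
      have hk1 : ((k:ℝ) + 1) ≤ t := by
        have : (k:ℕ) + 1 ≤ n := hk.2
        have : ((k:ℝ) + 1) ≤ (n:ℝ) := by exact_mod_cast this
        linarith
      have hf1 : f t ≤ f ((k:ℝ) + 1) := hfmono _ _ (by positivity) hk1
      have hb : ((m:ℝ) + 1) ^ α ≤ ((k:ℝ) + 1) ^ α := by
        apply Real.rpow_le_rpow (by positivity) _ hα0
        have := hk.1; exact_mod_cast by omega
      exact mul_le_mul hb hf1 (hf0 _ ht0) (Real.rpow_nonneg (by positivity) _)
    have hsum2 : ∑ k ∈ Finset.Ico m n, (((m:ℝ) + 1) ^ α * f t) ≤ ∑ k ∈ Finset.Ico m n, a k :=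
      Finset.sum_le_sum hterm
    have hsum3 : ∑ k ∈ Finset.Ico m n, a k ≤ S :=
      Summable.sum_le_tsum _ (fun k _ => hanonneg k) hsum
    rw [Finset.sum_const, Nat.card_Ico, nsmul_eq_mul] at hsum2
    calc ((n - m : ℕ) : ℝ) * ((m:ℝ) + 1) ^ α * f t
        = ((n - m : ℕ) : ℝ) * (((m:ℝ) + 1) ^ α * f t) := by ring
      _ ≤ ∑ k ∈ Finset.Ico m n, a k := hsum2
      _ ≤ S := hsum3
  -- compare n-m and m+1 with t/4
  have hq1 : t / 4 ≤ ((n - m : ℕ) : ℝ) := by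
    have h1 : 2 * (n - m) + 1 ≥ n := by omega
    have h3 : ((n:ℝ)) ≤ 2 * ((n - m : ℕ) : ℝ) + 1 := by exact_mod_cast h1
    linarith
  have hq2 : t / 4 ≤ ((m:ℝ)) + 1 := by
    have h2 : (2 * m + 2 : ℕ) ≥ n := by omega
    have h3 : ((n:ℝ)) ≤ 2 * (m:ℝ) + 2 := by exact_mod_cast h2
    linarith
  have ht4 : (0:ℝ) < t / 4 := by linarith
  have key2 : (t / 4) * (t / 4) ^ α * f t ≤ S := by
    refine le_trans ?_ key
    have hb : (t/4) ^ α ≤ ((m:ℝ) + 1) ^ α := Real.rpow_le_rpow ht4.le hq2 hα0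
    have hft : 0 ≤ f t := hf0 _ ht0
    have h0 : 0 ≤ (t/4) ^ α := Real.rpow_nonneg ht4.le _
    calc t / 4 * (t/4) ^ α * f t
        ≤ (((n - m : ℕ) : ℝ) * ((m:ℝ) + 1) ^ α) * f t :=
          mul_le_mul_of_nonneg_right (mul_le_mul hq1 hb h0 (Nat.cast_nonneg _)) hft
      _ = ((n - m : ℕ) : ℝ) * ((m:ℝ) + 1) ^ α * f t := by ring
  have hsplit : (t/4) ^ (α + 1) = (t/4) ^ α * (t/4) := by
    rw [Real.rpow_add ht4, Real.rpow_one]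
  have hpos : (0:ℝ) < (t/4) ^ (α+1) := Real.rpow_pos_of_pos ht4 _
  have h1 : f t ≤ S / (t/4) ^ (α+1) := by
    rw [le_div_iff₀ hpos]
    calc f t * (t/4) ^ (α+1) = t/4 * (t/4) ^ α * f t := by rw [hsplit]; ring
      _ ≤ S := key2
  have h2 : S / (t/4) ^ (α+1) = S * (4:ℝ) ^ (α+1) * (t ^ (α+1))⁻¹ := by
    rw [Real.div_rpow ht0.le (by norm_num)]
    have h4 : ((4:ℝ)) ^ (α+1) ≠ 0 := by positivity
    have htp : t ^ (α+1) ≠ 0 := by positivity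
    field_simp
  have h3 : t ^ (-(α+1)) = (t ^ (α+1))⁻¹ := Real.rpow_neg ht0.le _
  rw [h3]
  have hinv : (0:ℝ) ≤ (t ^ (α+1))⁻¹ := by positivity
  calc f t ≤ S / (t/4) ^ (α+1) := h1
    _ = S * (4:ℝ) ^ (α+1) * (t ^ (α+1))⁻¹ := h2
    _ ≤ (S+1) * (4:ℝ) ^ (α+1) * (t ^ (α+1))⁻¹ := by
        have : (0:ℝ) ≤ (4:ℝ) ^ (α+1) := by positivity
        nlinarith

lemma aux_bc (α c2 : ℝ) (hα : 1 ≤ α) (hc2 : 0 < c2)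
    {Ω : Type*} [MeasurableSpace Ω] (P : Measure Ω) [IsProbabilityMeasure P]
    {V : Type*} [Countable V] (d : V → V → ℝ)
    (hcard : ∀ (x : V) (r : ℝ), 1 ≤ r → {y : V | d x y ≤ r}.Finite ∧
      (Nat.card {y : V | d x y ≤ r} : ℝ) ≤ c2 * r ^ α)
    (x : V) (N : V → Ω → ℝ)
    (f : ℝ → ℝ) (hf0 : ∀ t : ℝ, 0 < t → 0 ≤ f t)
    (hfmono : ∀ s t : ℝ, 0 < s → s ≤ t → f t ≤ f s)
    (hPf : ∀ (y : V) (t : ℝ), 0 < t → P {ω | t ≤ N y ω} ≤ ENNReal.ofReal (f t))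
    (hsum : Summable (fun n : ℕ => ((n : ℝ) + 1) ^ α * f ((n : ℝ) + 1)))
    (γ1 γ2 : ℝ) (hγ1 : 0 < γ1) (hγ2 : 0 < γ2)
    (R : ℕ → ℝ) (Q : ℝ) (hQ : 1 < Q) (hRQ : ∀ᶠ n in atTop, Q ^ n ≤ R n) :
    ∀ᵐ ω ∂P, ∀ᶠ n in atTop, ∀ y : V, d x y ≤ γ2 * R n → N y ω ≤ γ1 * R n := by
  obtain ⟨M, hM, hfM⟩ := f_poly α hα f hf0 hfmono hsum
  have hQ0 : (0:ℝ) < Q := by linarith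
  have htend : Tendsto (fun n : ℕ => Q ^ n) atTop atTop :=
    tendsto_pow_atTop_atTop_of_one_lt hQ
  obtain ⟨n0, hn0⟩ := eventually_atTop.mp
    (hRQ.and (htend.eventually_ge_atTop (max (1/γ2) (4/γ1))))
  -- the constant
  set K : ℝ := c2 * γ2 ^ α * (M * γ1 ^ (-(α+1))) with hK
  have hK0 : 0 ≤ K := by
    have : (0:ℝ) < γ2 ^ α := Real.rpow_pos_of_pos hγ2 _
    have : (0:ℝ) < γ1 ^ (-(α+1)) := Real.rpow_pos_of_pos hγ1 _
    positivity
  set K' : ℝ := K + Q ^ n0 with hK'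
  -- single-n estimate
  have hest : ∀ n, n0 ≤ n →
      P {ω | ∃ y, d x y ≤ γ2 * R n ∧ γ1 * R n < N y ω} ≤ ENNReal.ofReal (K * (Q⁻¹) ^ n) := by
    intro n hn
    obtain ⟨hQR, hmax⟩ := hn0 n hn
    have hQn1 : (1:ℝ) ≤ Q ^ n := one_le_pow₀ hQ.le
    have hQnpos : (0:ℝ) < Q ^ n := by linarith
    have hRn1 : (1:ℝ) ≤ R n := le_trans hQn1 hQR
    have hRnpos : (0:ℝ) < R n := by linarith
    have hγ2R : (1:ℝ) ≤ γ2 * R n := by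
      have h1 : 1/γ2 ≤ R n := le_trans (le_trans (le_max_left _ _) hmax) hQR
      rw [div_le_iff₀ hγ2] at h1
      nlinarith
    have hγ1R : (4:ℝ) ≤ γ1 * R n := by
      have h1 : 4/γ1 ≤ R n := le_trans (le_trans (le_max_right _ _) hmax) hQR
      rw [div_le_iff₀ hγ1] at h1
      nlinarith
    have hγ1Rpos : (0:ℝ) < γ1 * R n := by linarith
    obtain ⟨hfin, hcardle⟩ := hcard x (γ2 * R n) hγ2R
    set S := hfin.toFinset with hSdef
    have hsub : {ω | ∃ y, d x y ≤ γ2 * R n ∧ γ1 * R n < N y ω} ⊆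
        ⋃ y ∈ S, {ω | γ1 * R n ≤ N y ω} := by
      rintro ω ⟨y, hy1, hy2⟩
      exact Set.mem_biUnion (hfin.mem_toFinset.mpr hy1) (le_of_lt hy2)
    have hcardS : (S.card : ℝ) ≤ c2 * (γ2 * R n) ^ α := by
      rwa [← Set.ncard_eq_toFinset_card _ hfin, ← Nat.card_coe_set_eq]
    calc P {ω | ∃ y, d x y ≤ γ2 * R n ∧ γ1 * R n < N y ω}
        ≤ P (⋃ y ∈ S, {ω | γ1 * R n ≤ N y ω}) := measure_mono hsub
      _ ≤ ∑ y ∈ S, P {ω | γ1 * R n ≤ N y ω} := measure_biUnion_finset_le S _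
      _ ≤ ∑ y ∈ S, ENNReal.ofReal (f (γ1 * R n)) :=
          Finset.sum_le_sum fun y _ => hPf y _ hγ1Rpos
      _ = (S.card : ℝ≥0∞) * ENNReal.ofReal (f (γ1 * R n)) := by
          rw [Finset.sum_const, nsmul_eq_mul]
      _ ≤ ENNReal.ofReal (c2 * (γ2 * R n) ^ α) * ENNReal.ofReal (f (γ1 * R n)) := by
          gcongr
          rw [← ENNReal.ofReal_natCast]
          exact ENNReal.ofReal_le_ofReal hcardS
      _ = ENNReal.ofReal (c2 * (γ2 * R n) ^ α * f (γ1 * R n)) := by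
          rw [← ENNReal.ofReal_mul]
          positivity
      _ ≤ ENNReal.ofReal (K * (Q⁻¹) ^ n) := by
          apply ENNReal.ofReal_le_ofReal
          have hfb : f (γ1 * R n) ≤ M * (γ1 * R n) ^ (-(α+1)) := hfM _ hγ1R
          have step1 : c2 * (γ2 * R n) ^ α * f (γ1 * R n)
              ≤ c2 * (γ2 * R n) ^ α * (M * (γ1 * R n) ^ (-(α+1))) := by
            apply mul_le_mul_of_nonneg_left hfb
            have : (0:ℝ) < (γ2 * R n) ^ α := Real.rpow_pos_of_pos (by positivity) _
            positivity
          have step2 : c2 * (γ2 * R n) ^ α * (M * (γ1 * R n) ^ (-(α+1)))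
              = K * (R n)⁻¹ := by
            rw [Real.mul_rpow hγ2.le hRnpos.le, Real.mul_rpow hγ1.le hRnpos.le]
            have hmul : (R n) ^ α * (R n) ^ (-(α+1)) = (R n)⁻¹ := by
              rw [← Real.rpow_add hRnpos, ← Real.rpow_neg_one (R n)]
              norm_num
            calc c2 * (γ2 ^ α * (R n) ^ α) * (M * (γ1 ^ (-(α+1)) * (R n) ^ (-(α+1))))
                = (c2 * γ2 ^ α * (M * γ1 ^ (-(α+1)))) * ((R n) ^ α * (R n) ^ (-(α+1))) := by
                  ring
              _ = K * (R n)⁻¹ := by rw [hmul]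
          have step3 : K * (R n)⁻¹ ≤ K * (Q⁻¹) ^ n := by
            rw [inv_pow]
            apply mul_le_mul_of_nonneg_left _ hK0
            exact inv_anti₀ hQnpos hQR
          linarith
  -- global bound
  have hQinv0 : (0:ℝ) ≤ Q⁻¹ := by positivity
  have hQn00 : (0:ℝ) < Q ^ n0 := pow_pos hQ0 n0
  have hbound : ∀ n, P {ω | ∃ y, d x y ≤ γ2 * R n ∧ γ1 * R n < N y ω}
      ≤ ENNReal.ofReal (K' * (Q⁻¹) ^ n) := by
    intro n
    by_cases hn : n0 ≤ n
    · refine (hest n hn).trans (ENNReal.ofReal_le_ofReal ?_)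
      have : (0:ℝ) ≤ Q ^ n0 * (Q⁻¹) ^ n := by positivity
      have hp : (0:ℝ) ≤ (Q⁻¹) ^ n := by positivity
      rw [hK']
      nlinarith
    · push_neg at hn
      have h1 : (1:ℝ) ≤ K' * (Q⁻¹) ^ n := by
        have hq : Q ^ n ≤ Q ^ n0 := pow_le_pow_right₀ hQ.le hn.le
        have hqq : (Q ^ n) * (Q⁻¹) ^ n = 1 := by
          rw [inv_pow, mul_inv_cancel₀ (ne_of_gt (pow_pos hQ0 n))]
        have hp : (0:ℝ) ≤ (Q⁻¹) ^ n := by positivity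
        rw [hK']
        nlinarith
      calc P _ ≤ 1 := prob_le_one
        _ ≤ ENNReal.ofReal (K' * (Q⁻¹) ^ n) := by
            rw [← ENNReal.ofReal_one]
            exact ENNReal.ofReal_le_ofReal h1
  -- summability and Borel-Cantelli
  have hsumgeo : Summable (fun n : ℕ => K' * (Q⁻¹) ^ n) :=
    (summable_geometric_of_lt_one hQinv0 (inv_lt_one_of_one_lt₀ hQ)).mul_left K'
  have hK'0 : (0:ℝ) ≤ K' := by positivity
  have htsum : ∑' n, P {ω | ∃ y, d x y ≤ γ2 * R n ∧ γ1 * R n < N y ω} ≠ ⊤ := by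
    apply ne_top_of_le_ne_top _ (ENNReal.tsum_le_tsum hbound)
    rw [← ENNReal.ofReal_tsum_of_nonneg (fun n => by positivity) hsumgeo]
    exact ENNReal.ofReal_ne_top
  have hzero := measure_setOf_frequently_eq_zero htsum
  have hae : ∀ᵐ ω ∂P, ¬ ∃ᶠ n in atTop, ∃ y, d x y ≤ γ2 * R n ∧ γ1 * R n < N y ω :=
    measure_eq_zero_iff_ae_notMem.mp hzero
  filter_upwards [hae] with ω hω
  rw [not_frequently] at hω
  refine hω.mono fun n hn y hy => ?_
  by_contra hcon
  exact hn ⟨y, hy, lt_of_not_ge hcon⟩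

/-- Lemma 3.1 (1) of the paper. -/
theorem stmt11 (α β c2 : ℝ) (hα : 1 ≤ α) (hβ : 0 < β) (hc2 : 0 < c2)
    {Ω : Type*} [MeasurableSpace Ω] (P : Measure Ω) [IsProbabilityMeasure P]
    (V : Type*) [Countable V] (d : V → V → ℝ)
    (hcard : ∀ (x : V) (r : ℝ), 1 ≤ r → {y : V | d x y ≤ r}.Finite ∧
      (Nat.card {y : V | d x y ≤ r} : ℝ) ≤ c2 * r ^ α)
    (x : V) (N : V → Ω → ℝ) (hN : ∀ (y : V) (ω : Ω), 0 ≤ N y ω)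
    (f : ℝ → ℝ) (hf0 : ∀ t : ℝ, 0 < t → 0 ≤ f t) (hf1 : ∀ t : ℝ, 0 < t → f t ≤ 1)
    (hfmono : ∀ s t : ℝ, 0 < s → s ≤ t → f t ≤ f s)
    (hPf : ∀ (y : V) (t : ℝ), 0 < t → P {ω | t ≤ N y ω} ≤ ENNReal.ofReal (f t))
    (hsum : Summable (fun n : ℕ => ((n : ℝ) + 1) ^ α * f ((n : ℝ) + 1)))
    (γ1 γ2 q C : ℝ) (hγ1 : 0 < γ1) (hγ2 : 0 < γ2) (hq : 1 < q) (hC : 0 < C) :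
    ∀ᵐ ω ∂P, ∃ L : ℕ, ∀ n : ℕ, L ≤ n →
      (∀ y : V, d x y ≤ γ2 * q ^ ((n : ℝ) / β) → N y ω ≤ γ1 * q ^ ((n : ℝ) / β)) ∧
      (∀ y : V,
        d x y ≤ γ2 * (C * (q ^ (n : ℝ)) ^ (1 / β) *
          Real.log (Real.log (q ^ (n : ℝ))) ^ (1 - 1 / β)) →
        N y ω ≤ γ1 * (C * (q ^ (n : ℝ)) ^ (1 / β) *
          Real.log (Real.log (q ^ (n : ℝ))) ^ (1 - 1 / β))) := by
  have hq0 : (0:ℝ) < q := lt_trans one_pos hq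
  set Q1 : ℝ := q ^ (1/β) with hQ1def
  have hQ1 : 1 < Q1 := by
    rw [hQ1def, Real.one_lt_rpow_iff_of_pos hq0]
    exact Or.inl ⟨hq, by positivity⟩
  have hQ10 : (0:ℝ) < Q1 := by linarith
  have hR1 : ∀ n : ℕ, Q1 ^ n = q ^ ((n:ℝ)/β) := by
    intro n
    rw [← Real.rpow_natCast Q1 n, hQ1def, ← Real.rpow_mul hq0.le]
    congr 1; ring
  set Q2 : ℝ := Real.sqrt Q1 with hQ2def
  have hQ2 : 1 < Q2 := by
    have h := Real.sqrt_lt_sqrt (by norm_num) hQ1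
    rwa [Real.sqrt_one] at h
  have hQ2sq : Q2 * Q2 = Q1 := Real.mul_self_sqrt hQ10.le
  have hlogq : 0 < Real.log q := Real.log_pos hq
  have hA : ∀ n : ℕ, (q ^ ((n:ℝ))) ^ (1/β) = Q1 ^ n := by
    intro n
    rw [← Real.rpow_natCast Q1 n, hQ1def, ← Real.rpow_mul hq0.le, ← Real.rpow_mul hq0.le]
    congr 1; ring
  have hlog : ∀ n : ℕ, Real.log (q ^ ((n:ℝ))) = (n:ℝ) * Real.log q :=
    fun n => Real.log_rpow hq0 _
  have hXev : ∀ᶠ n : ℕ in atTop, Real.exp 1 ≤ (n:ℝ) * Real.log q := by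
    filter_upwards [(tendsto_natCast_atTop_atTop (R := ℝ)).eventually_ge_atTop
      (Real.exp 1 / Real.log q)] with n hn
    rw [div_le_iff₀ hlogq] at hn
    linarith
  have claim : ∃ k : ℕ, ∃ cc : ℝ, 0 < cc ∧ ∀ᶠ n : ℕ in atTop,
      cc * (((n:ℝ)) ^ k)⁻¹ ≤ Real.log ((n:ℝ) * Real.log q) ^ (1 - 1/β) := by
    rcases le_or_gt 0 (1 - 1/β) with he | he
    · refine ⟨0, 1, one_pos, ?_⟩
      filter_upwards [hXev] with n hn
      have hX0 : (0:ℝ) < (n:ℝ) * Real.log q := lt_of_lt_of_le (Real.exp_pos 1) hn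
      have hX1 : (1:ℝ) ≤ Real.log ((n:ℝ) * Real.log q) := by
        rw [Real.le_log_iff_exp_le hX0]; exact hn
      simp only [pow_zero, inv_one, mul_one]
      calc (1:ℝ) = 1 ^ (1-1/β) := (Real.one_rpow _).symm
        _ ≤ _ := Real.rpow_le_rpow zero_le_one hX1 he
    · refine ⟨⌈1/β - 1⌉₊, Real.log q ^ (1 - 1/β), Real.rpow_pos_of_pos hlogq _, ?_⟩
      filter_upwards [hXev, eventually_ge_atTop 1] with n hn hn1
      have hn1R : (1:ℝ) ≤ (n:ℝ) := by exact_mod_cast hn1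
      have hX0 : (0:ℝ) < (n:ℝ) * Real.log q := lt_of_lt_of_le (Real.exp_pos 1) hn
      have hlogX : 0 < Real.log ((n:ℝ) * Real.log q) := by
        have h1 : (1:ℝ) ≤ Real.log ((n:ℝ) * Real.log q) := by
          rw [Real.le_log_iff_exp_le hX0]; exact hn
        linarith
      have s1 : ((n:ℝ) * Real.log q) ^ (1-1/β) ≤ Real.log ((n:ℝ) * Real.log q) ^ (1-1/β) :=
        Real.rpow_le_rpow_of_nonpos hlogX (Real.log_le_self hX0.le) he.le
      have s2 : ((n:ℝ) * Real.log q) ^ (1-1/β) = (n:ℝ)^(1-1/β) * Real.log q ^ (1-1/β) :=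
        Real.mul_rpow (by positivity) hlogq.le
      have s3 : (((n:ℝ))^(⌈1/β - 1⌉₊ : ℕ))⁻¹ ≤ (n:ℝ) ^ (1-1/β) := by
        rw [← Real.rpow_natCast (n:ℝ) _, ← Real.rpow_neg (by positivity)]
        apply Real.rpow_le_rpow_of_exponent_le hn1R
        have hceil : (1/β - 1 : ℝ) ≤ (⌈1/β - 1⌉₊ : ℝ) := Nat.le_ceil _
        linarith
      calc Real.log q ^ (1-1/β) * (((n:ℝ))^(⌈1/β - 1⌉₊ : ℕ))⁻¹
          ≤ Real.log q ^ (1-1/β) * (n:ℝ)^(1-1/β) :=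
            mul_le_mul_of_nonneg_left s3 (Real.rpow_nonneg hlogq.le _)
        _ = ((n:ℝ) * Real.log q) ^ (1-1/β) := by rw [s2]; ring
        _ ≤ _ := s1
  obtain ⟨k, cc, hcc, hev⟩ := claim
  set R2 : ℕ → ℝ := fun n => C * (q ^ ((n:ℝ))) ^ (1/β) *
      Real.log (Real.log (q ^ ((n:ℝ)))) ^ (1 - 1/β) with hR2def
  have hRQ2 : ∀ᶠ n : ℕ in atTop, Q2 ^ n ≤ R2 n := by
    filter_upwards [hev, geom_dom hQ2 k ((C * cc)⁻¹), eventually_ge_atTop 1] with n hw hg hn1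
    have hn1R : (1:ℝ) ≤ (n:ℝ) := by exact_mod_cast hn1
    have hnk : (0:ℝ) < (n:ℝ)^k := by positivity
    have hQ2n : (0:ℝ) < Q2 ^ n := pow_pos (by linarith) n
    have hwn : (0:ℝ) ≤ cc * ((n:ℝ)^k)⁻¹ := by positivity
    have h1 : 1 ≤ C * Q2^n * (Real.log ((n:ℝ) * Real.log q) ^ (1 - 1/β)) := by
      have hCQ : (C * cc)⁻¹ * (n:ℝ)^k * (cc * ((n:ℝ)^k)⁻¹) = C⁻¹ := by
        field_simp
      have hstep : (C * cc)⁻¹ * (n:ℝ)^k * (cc * ((n:ℝ)^k)⁻¹) ≤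
          Q2^n * (Real.log ((n:ℝ) * Real.log q) ^ (1 - 1/β)) := by
        apply mul_le_mul hg hw hwn hQ2n.le
      rw [hCQ] at hstep
      calc (1:ℝ) = C * C⁻¹ := by field_simp
        _ ≤ C * (Q2^n * (Real.log ((n:ℝ) * Real.log q) ^ (1 - 1/β))) :=
            mul_le_mul_of_nonneg_left hstep hC.le
        _ = C * Q2^n * (Real.log ((n:ℝ) * Real.log q) ^ (1 - 1/β)) := by ring
    have hR2eq : R2 n = Q2^n *
        (C * Q2^n * (Real.log ((n:ℝ) * Real.log q) ^ (1 - 1/β))) := by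
      rw [hR2def]
      simp only
      rw [hA n, hlog n, ← hQ2sq, mul_pow]
      ring
    rw [hR2eq]
    exact le_mul_of_one_le_right hQ2n.le h1
  have h1 := aux_bc α c2 hα hc2 P d hcard x N f hf0 hfmono hPf hsum γ1 γ2 hγ1 hγ2
    (fun n => q ^ ((n:ℝ)/β)) Q1 hQ1 (Eventually.of_forall fun n => (hR1 n).le)
  have h2 := aux_bc α c2 hα hc2 P d hcard x N f hf0 hfmono hPf hsum γ1 γ2 hγ1 hγ2
    R2 Q2 hQ2 hRQ2
  filter_upwards [h1, h2] with ω ha hb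
  obtain ⟨L, hL⟩ := eventually_atTop.mp (ha.and hb)
  exact ⟨L, fun n hn => hL n hn⟩
end

section
/- Let α ≥ 1, β > 0 and c2 > 0. Let (Ω, F, ℙ) be a probability space, V a countable set, d : V × V → [0,∞) a function such that #B(x,r) ≤ c2·r^α for all x ∈ V and r ≥ 1, and fix x ∈ V. Let {N_y}_{y∈V} be nonnegative random variables on Ω and f : (0,∞) → [0,1] a nonincreasing function with ℙ(N_y ≥ t) ≤ f(t) for all y ∈ V and t > 0. Assume ∑_{n≥1} n^{α·β}·f(n) < ∞. Then for all γ1, γ2 > 0 and q > 1, for ℙ-almost every ω there exists L = L(ω) such that for all n ≥ L, N_y(ω) ≤ γ1·q^{n/β} for every y with d(x,y) ≤ γ2·q^n. -/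
open MeasureTheory Filter ENNReal

/-- Lemma 3.1 (2) of the paper. -/
theorem stmt12 (α β c2 : ℝ) (hα : 1 ≤ α) (hβ : 0 < β) (hc2 : 0 < c2)
    {Ω : Type*} [MeasurableSpace Ω] (P : Measure Ω) [IsProbabilityMeasure P]
    (V : Type*) [Countable V] (d : V → V → ℝ)
    (hcard : ∀ (x : V) (r : ℝ), 1 ≤ r → {y : V | d x y ≤ r}.Finite ∧
      (Nat.card {y : V | d x y ≤ r} : ℝ) ≤ c2 * r ^ α)
    (x : V) (N : V → Ω → ℝ) (hN : ∀ (y : V) (ω : Ω), 0 ≤ N y ω)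
    (f : ℝ → ℝ) (hf0 : ∀ t : ℝ, 0 < t → 0 ≤ f t) (hf1 : ∀ t : ℝ, 0 < t → f t ≤ 1)
    (hfmono : ∀ s t : ℝ, 0 < s → s ≤ t → f t ≤ f s)
    (hPf : ∀ (y : V) (t : ℝ), 0 < t → P {ω | t ≤ N y ω} ≤ ENNReal.ofReal (f t))
    (hsum : Summable (fun n : ℕ => ((n : ℝ) + 1) ^ (α * β) * f ((n : ℝ) + 1)))
    (γ1 γ2 q : ℝ) (hγ1 : 0 < γ1) (hγ2 : 0 < γ2) (hq : 1 < q) :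
    ∀ᵐ ω ∂P, ∃ L : ℕ, ∀ n : ℕ, L ≤ n →
      ∀ y : V, d x y ≤ γ2 * q ^ (n : ℝ) → N y ω ≤ γ1 * q ^ ((n : ℝ) / β) := by
  have hq0 : (0:ℝ) < q := lt_trans one_pos hq
  -- radii
  set r : ℕ → ℝ := fun k => max 1 (γ2 * (((k:ℝ)+2)/γ1) ^ β) with hrdef
  have hr1 : ∀ k, (1:ℝ) ≤ r k := fun k => le_max_left _ _
  have hr0 : ∀ k, (0:ℝ) ≤ r k := fun k => le_trans zero_le_one (hr1 k)
  -- events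
  set A : ℕ → Set Ω := fun k => {ω | ∃ y, d x y ≤ r k ∧ ((k:ℝ)+1) ≤ N y ω} with hAdef
  -- constants
  set K : ℝ := 1 + γ2 / γ1 ^ β with hKdef
  have hK0 : 0 < K := by positivity
  -- bound on r k
  have hrK : ∀ k : ℕ, r k ≤ K * ((k:ℝ)+2) ^ β := by
    intro k
    have hk0 : (0:ℝ) ≤ (k:ℝ) := Nat.cast_nonneg k
    have hk2 : (1:ℝ) ≤ (k:ℝ)+2 := by linarith
    have hpow1 : (1:ℝ) ≤ ((k:ℝ)+2) ^ β := Real.one_le_rpow hk2 hβ.le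
    have hsplit : γ2 * (((k:ℝ)+2)/γ1) ^ β = (γ2 / γ1 ^ β) * ((k:ℝ)+2) ^ β := by
      rw [Real.div_rpow (by positivity) hγ1.le]; ring
    have hK1 : (1:ℝ) ≤ K := by
      have : (0:ℝ) ≤ γ2 / γ1 ^ β := by positivity
      rw [hKdef]; linarith
    apply max_le
    · exact hK1.trans (le_mul_of_one_le_right hK0.le hpow1)
    · rw [hsplit]
      have : (0:ℝ) ≤ γ2 / γ1 ^ β := by positivity
      nlinarith [hpow1]
  -- bound on measure of A k
  have hAbound : ∀ k : ℕ, P (A k) ≤ ENNReal.ofReal (c2 * (r k) ^ α * f ((k:ℝ)+1)) := by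
    intro k
    have hk1 : (0:ℝ) < (k:ℝ)+1 := by positivity
    obtain ⟨hfin, hcardle⟩ := hcard x (r k) (hr1 k)
    have hsub : A k ⊆ ⋃ y ∈ hfin.toFinset, {ω | ((k:ℝ)+1) ≤ N y ω} := by
      rintro ω ⟨y, hy, hNy⟩
      exact Set.mem_biUnion (hfin.mem_toFinset.2 hy) hNy
    have hcard' : (hfin.toFinset.card : ℝ) ≤ c2 * (r k) ^ α := by
      rwa [← Set.ncard_eq_toFinset_card _ hfin, ← Nat.card_coe_set_eq]
    calc P (A k) ≤ P (⋃ y ∈ hfin.toFinset, {ω | ((k:ℝ)+1) ≤ N y ω}) := measure_mono hsub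
      _ ≤ ∑ y ∈ hfin.toFinset, P {ω | ((k:ℝ)+1) ≤ N y ω} := measure_biUnion_finset_le _ _
      _ ≤ ∑ _y ∈ hfin.toFinset, ENNReal.ofReal (f ((k:ℝ)+1)) :=
          Finset.sum_le_sum fun y _ => hPf y _ hk1
      _ = (hfin.toFinset.card : ℝ≥0∞) * ENNReal.ofReal (f ((k:ℝ)+1)) := by
          rw [Finset.sum_const, nsmul_eq_mul]
      _ ≤ ENNReal.ofReal (c2 * (r k) ^ α) * ENNReal.ofReal (f ((k:ℝ)+1)) := by
          gcongr
          rw [← ENNReal.ofReal_natCast]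
          exact ENNReal.ofReal_le_ofReal hcard'
      _ = ENNReal.ofReal (c2 * (r k) ^ α * f ((k:ℝ)+1)) := by
          rw [← ENNReal.ofReal_mul (by positivity)]
  -- summable dominating sequence
  set g : ℕ → ℝ := fun k => c2 * K ^ α * (2:ℝ) ^ (α*β) * (((k:ℝ)+1) ^ (α*β) * f ((k:ℝ)+1))
    with hgdef
  have hαβ : 0 ≤ α * β := by positivity
  have hdom : ∀ k : ℕ, c2 * (r k) ^ α * f ((k:ℝ)+1) ≤ g k := by
    intro k
    have hk1 : (0:ℝ) < (k:ℝ)+1 := by positivity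
    have h1 : (r k) ^ α ≤ (K * ((k:ℝ)+2) ^ β) ^ α :=
      Real.rpow_le_rpow (hr0 k) (hrK k) (by linarith)
    have h2 : (K * ((k:ℝ)+2) ^ β) ^ α = K ^ α * ((k:ℝ)+2) ^ (β*α) := by
      rw [Real.mul_rpow hK0.le (by positivity), ← Real.rpow_mul (by positivity)]
    have h3 : ((k:ℝ)+2) ^ (β*α) ≤ (2 * ((k:ℝ)+1)) ^ (β*α) :=
      Real.rpow_le_rpow (by positivity) (by linarith) (by positivity)
    have h4 : (2 * ((k:ℝ)+1)) ^ (β*α) = (2:ℝ) ^ (β*α) * ((k:ℝ)+1) ^ (β*α) :=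
      Real.mul_rpow (by norm_num) (by positivity)
    have hf' : 0 ≤ f ((k:ℝ)+1) := hf0 _ hk1
    have hba : β * α = α * β := mul_comm β α
    have : (r k) ^ α ≤ K ^ α * ((2:ℝ) ^ (α*β) * ((k:ℝ)+1) ^ (α*β)) := by
      rw [← hba]
      calc (r k) ^ α ≤ (K * ((k:ℝ)+2) ^ β) ^ α := h1
        _ = K ^ α * ((k:ℝ)+2) ^ (β*α) := h2
        _ ≤ K ^ α * ((2:ℝ) ^ (β*α) * ((k:ℝ)+1) ^ (β*α)) := by
            rw [← h4]
            exact mul_le_mul_of_nonneg_left h3 (by positivity)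
    have h5 := mul_le_mul_of_nonneg_left (mul_le_mul_of_nonneg_right this hf') hc2.le
    show c2 * (r k) ^ α * f ((k:ℝ)+1) ≤
      c2 * K ^ α * (2:ℝ) ^ (α*β) * (((k:ℝ)+1) ^ (α*β) * f ((k:ℝ)+1))
    nlinarith [h5]
  have hgsum : Summable g := by
    exact (hsum.mul_left _)
  have hgnonneg : ∀ k : ℕ, 0 ≤ g k := by
    intro k
    have hk1 : (0:ℝ) < (k:ℝ)+1 := by positivity
    have := hf0 _ hk1
    have h2 : (0:ℝ) ≤ ((k:ℝ)+1) ^ (α*β) := by positivity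
    positivity
  -- Borel–Cantelli
  have htsum : (∑' k, P (A k)) ≠ ⊤ := by
    have h1 : (∑' k, P (A k)) ≤ ∑' k, ENNReal.ofReal (g k) := by
      refine ENNReal.tsum_le_tsum fun k => (hAbound k).trans (ENNReal.ofReal_le_ofReal (hdom k))
    have h2 : (∑' k, ENNReal.ofReal (g k)) = ENNReal.ofReal (∑' k, g k) :=
      (ENNReal.ofReal_tsum_of_nonneg hgnonneg hgsum).symm
    exact ne_top_of_le_ne_top (by rw [h2]; exact ENNReal.ofReal_ne_top) h1
  have hae := MeasureTheory.ae_eventually_notMem (μ := P) htsum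
  filter_upwards [hae] with ω hω
  obtain ⟨M, hM⟩ := eventually_atTop.1 hω
  -- choose L
  have htend : Tendsto (fun n : ℕ => γ1 * q ^ ((n:ℝ)/β)) atTop atTop := by
    have h1 : Tendsto (fun n : ℕ => (n:ℝ)/β) atTop atTop :=
      tendsto_natCast_atTop_atTop.atTop_div_const hβ
    have h2 : Tendsto (fun x : ℝ => q ^ x) atTop atTop := by
      simp_rw [Real.rpow_def_of_pos hq0]
      exact Real.tendsto_exp_atTop.comp (tendsto_id.const_mul_atTop (Real.log_pos hq))
    exact (h2.comp h1).const_mul_atTop hγ1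
  obtain ⟨L, hL⟩ := eventually_atTop.1 (htend.eventually_ge_atTop ((M:ℝ)+2))
  refine ⟨L, fun n hn y hy => ?_⟩
  set t : ℝ := γ1 * q ^ ((n:ℝ)/β) with htdef
  have ht : (M:ℝ)+2 ≤ t := hL n hn
  have ht0 : (0:ℝ) < t := by positivity
  set m : ℕ := Nat.floor t with hmdef
  have hmM : M + 2 ≤ m := Nat.le_floor (by push_cast; linarith)
  have hm1 : 1 ≤ m := by omega
  set k : ℕ := m - 1 with hkdef
  have hkM : M ≤ k := by omega
  have hkm : (k:ℝ) = (m:ℝ) - 1 := by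
    rw [hkdef, Nat.cast_sub hm1]; norm_num
  have hfl : (m:ℝ) ≤ t := by rw [hmdef]; exact Nat.floor_le ht0.le
  have hfl2 : t < (m:ℝ)+1 := by rw [hmdef]; exact Nat.lt_floor_add_one t
  have hk1t : (k:ℝ)+1 ≤ t := by rw [hkm]; linarith
  have htk2 : t ≤ (k:ℝ)+2 := by rw [hkm]; linarith
  have hnotA : ω ∉ A k := hM k hkM
  -- show d x y ≤ r k
  have hqn : γ2 * q ^ ((n:ℝ)) = γ2 * (t/γ1) ^ β := by
    rw [htdef, mul_div_cancel_left₀ _ hγ1.ne', ← Real.rpow_mul hq0.le,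
      div_mul_cancel₀ _ hβ.ne']
  have hdr : d x y ≤ r k := by
    have h1 : γ2 * (t/γ1) ^ β ≤ γ2 * (((k:ℝ)+2)/γ1) ^ β := by
      have : t/γ1 ≤ ((k:ℝ)+2)/γ1 := by gcongr
      exact mul_le_mul_of_nonneg_left
        (Real.rpow_le_rpow (by positivity) this hβ.le) hγ2.le
    calc d x y ≤ γ2 * q ^ ((n:ℝ)) := hy
      _ = γ2 * (t/γ1) ^ β := hqn
      _ ≤ γ2 * (((k:ℝ)+2)/γ1) ^ β := h1
      _ ≤ r k := le_max_right _ _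
  by_contra hcon
  push_neg at hcon
  have : ((k:ℝ)+1) ≤ N y ω := le_trans hk1t (le_of_lt hcon)
  exact hnotA ⟨y, hdr, this⟩
end

section
/- Let (Ω, F, P) be a probability space and {A_k}_{k≥1} a family of events satisfying: (1) ∑_{k≥1} P(A_k) = ∞; (2) P(limsup_k A_k) is either 0 or 1; (3) there exist constants c1, c2 > 0 such that for each j ≥ 1 there is a finite set S_j of indices with (i) ∑_{i ∈ S_j} P(A_j ∩ A_i) ≤ c1·P(A_j), and (ii) P(A_j ∩ A_k) ≤ c2·P(A_j)·P(A_k) for every k ≥ j+1 with k ∉ S_j. Then P(limsup_k A_k) = 1, i.e. infinitely many of the events A_k occur with probability 1. -/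
/-!
For a finite set of indices `t`, Cauchy–Schwarz applied to `∑ k ∈ t, 𝟙 (A k)` and `𝟙 (⋃ k ∈ t, A k)`
gives the Chung–Erdős inequality `S² ≤ (∑ j ∈ t, ∑ k ∈ t, P (A j ∩ A k)) * P (⋃ k ∈ t, A k)`, with
`S = ∑ k ∈ t, P (A k)`. The local correlation bounds make the double sum at most
`(1 + 2 c₁) S + 2 c₂ S²`. Since the series diverges, every tail contains a block `t` with
`S ≥ (1 + 2 c₁) / c₂`, so `P (⋃ k ≥ m, A k) ≥ (3 c₂)⁻¹` for every `m`. Hence `P (limsup A) > 0`,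
and the zero–one hypothesis forces `P (limsup A) = 1`.
-/

open MeasureTheory Filter Finset

open scoped ENNReal

theorem ENNReal.lintegral_mul_sq_le {α : Type*} [MeasurableSpace α] (μ : Measure α)
    {f g : α → ℝ≥0∞} (hf : AEMeasurable f μ) (hg : AEMeasurable g μ) :
    (∫⁻ a, f a * g a ∂μ) ^ 2 ≤ (∫⁻ a, f a ^ 2 ∂μ) * ∫⁻ a, g a ^ 2 ∂μ := by
  have hsq : ∀ x : ℝ≥0∞, x ^ (2 : ℝ) = x ^ 2 := ENNReal.rpow_two
  have hsqrt : ∀ x : ℝ≥0∞, (x ^ (1 / 2 : ℝ)) ^ 2 = x := fun x => by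
    rw [← hsq, ← ENNReal.rpow_mul]; norm_num
  have holder := ENNReal.lintegral_mul_le_Lp_mul_Lq μ Real.HolderConjugate.two_two hf hg
  simp only [Pi.mul_apply, hsq] at holder
  calc (∫⁻ a, f a * g a ∂μ) ^ 2
      ≤ ((∫⁻ a, f a ^ 2 ∂μ) ^ (1 / 2 : ℝ) * (∫⁻ a, g a ^ 2 ∂μ) ^ (1 / 2 : ℝ)) ^ 2 := by
        gcongr
    _ = (∫⁻ a, f a ^ 2 ∂μ) * ∫⁻ a, g a ^ 2 ∂μ := by rw [mul_pow, hsqrt, hsqrt]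

theorem sq_sum_measure_le_mul_measure_biUnion {Ω ι : Type*} [MeasurableSpace Ω] (μ : Measure Ω)
    {A : ι → Set Ω} (hA : ∀ i, MeasurableSet (A i)) (t : Finset ι) :
    (∑ i ∈ t, μ (A i)) ^ 2 ≤ (∑ i ∈ t, ∑ j ∈ t, μ (A i ∩ A j)) * μ (⋃ i ∈ t, A i) := by
  set U := ⋃ i ∈ t, A i
  have hU : MeasurableSet U := t.measurableSet_biUnion fun i _ => hA i
  let f : Ω → ℝ≥0∞ := fun ω => ∑ i ∈ t, (A i).indicator 1 ω
  have hf : Measurable f := Finset.measurable_sum t fun i _ => measurable_one.indicator (hA i)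
  have hfU : ∀ ω, f ω * U.indicator 1 ω = f ω := fun ω => by
    by_cases hω : ω ∈ U
    · simp [hω]
    · rw [Set.indicator_of_notMem hω, mul_zero]
      exact (sum_eq_zero fun i hi =>
        Set.indicator_of_notMem (fun h => hω (Set.mem_biUnion hi h)) _).symm
  have hf_sq : ∀ ω, f ω ^ 2 = ∑ i ∈ t, ∑ j ∈ t, (A i ∩ A j).indicator 1 ω := fun ω => by
    simp only [f, sq, sum_mul_sum, Set.inter_indicator_one, Pi.mul_apply]
  have hU_sq : ∀ ω, U.indicator (1 : Ω → ℝ≥0∞) ω ^ 2 = U.indicator 1 ω := fun ω => by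
    by_cases hω : ω ∈ U <;> simp [hω]
  have hmeas_inter : ∀ i j, Measurable ((A i ∩ A j).indicator (1 : Ω → ℝ≥0∞)) :=
    fun i j => measurable_one.indicator ((hA i).inter (hA j))
  calc (∑ i ∈ t, μ (A i)) ^ 2 = (∫⁻ ω, f ω * U.indicator 1 ω ∂μ) ^ 2 := by
        simp_rw [hfU, f]
        rw [lintegral_finsetSum t fun i _ => measurable_one.indicator (hA i)]
        simp_rw [lintegral_indicator_one (hA _)]
    _ ≤ (∫⁻ ω, f ω ^ 2 ∂μ) * ∫⁻ ω, U.indicator 1 ω ^ 2 ∂μ :=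
        ENNReal.lintegral_mul_sq_le μ hf.aemeasurable
          (measurable_one.indicator hU).aemeasurable
    _ = (∑ i ∈ t, ∑ j ∈ t, μ (A i ∩ A j)) * μ U := by
        simp_rw [hf_sq, hU_sq, lintegral_indicator_one hU]
        rw [lintegral_finsetSum t fun i _ => Finset.measurable_sum t fun j _ => hmeas_inter i j]
        simp_rw [lintegral_finsetSum t fun j _ => hmeas_inter _ j,
          lintegral_indicator_one ((hA _).inter (hA _))]

theorem Finset.sum_sum_eq_sum_add_two_nsmul_sum_lt {ι M : Type*} [LinearOrder ι]
    [AddCommMonoid M] (t : Finset ι) {f : ι → ι → M} (hf : ∀ i j, f i j = f j i) :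
    ∑ i ∈ t, ∑ j ∈ t, f i j = ∑ i ∈ t, f i i + 2 • ∑ i ∈ t, ∑ j ∈ t with i < j, f i j := by
  have hrow : ∀ i ∈ t, ∑ j ∈ t, f i j =
      f i i + ∑ j ∈ t with i < j, f i j + ∑ j ∈ t with j < i, f i j := fun i hi => by
    rw [← sum_filter_add_sum_filter_not t (i < ·), add_comm (f i i), add_assoc]
    congr 1
    rw [← sum_filter_add_sum_filter_not (t.filter (¬ i < ·)) (· = i), filter_filter,
      filter_filter]
    have hdiag : (t.filter fun j => ¬ i < j ∧ j = i) = {i} := by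
      ext j; simp only [mem_filter, mem_singleton]; grind
    have hbelow : (t.filter fun j => ¬ i < j ∧ ¬ j = i) = t.filter (· < i) :=
      filter_congr fun j _ => by grind
    rw [hdiag, hbelow, sum_singleton]
  have hlower : ∑ i ∈ t, ∑ j ∈ t with j < i, f i j = ∑ i ∈ t, ∑ j ∈ t with i < j, f i j := by
    rw [sum_comm' (t' := t) (s' := fun j => t.filter (j < ·)) (by simp; tauto)]
    simp_rw [hf]
  rw [sum_congr rfl hrow, sum_add_distrib, sum_add_distrib, hlower, add_assoc, two_nsmul]

theorem ENNReal.exists_le_sum_Ico_of_tsum_eq_top {f : ℕ → ℝ≥0∞} (hf : ∑' k, f k = ∞)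
    (hf_ne_top : ∀ k, f k ≠ ∞) (m : ℕ) {b : ℝ≥0∞} (hb : b ≠ ∞) :
    ∃ n, b ≤ ∑ k ∈ Ico m n, f k := by
  have htail : ∑' k, f (k + m) = ∞ := by
    rw [← ENNReal.summable.sum_add_tsum_nat_add', ENNReal.add_eq_top] at hf
    exact hf.resolve_left (ENNReal.sum_ne_top.mpr fun k _ => hf_ne_top k)
  obtain ⟨n, hn⟩ : ∃ n, b < ∑ k ∈ range n, f (k + m) := by
    rwa [← lt_iSup_iff, ← ENNReal.tsum_eq_iSup_nat, htail, lt_top_iff_ne_top]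
  refine ⟨m + n, hn.le.trans_eq ?_⟩
  rw [sum_Ico_eq_sum_range, add_tsub_cancel_left]
  simp_rw [add_comm m]

theorem le_measure_limsup_atTop {Ω : Type*} [MeasurableSpace Ω] {μ : Measure Ω}
    [IsFiniteMeasure μ] {s : ℕ → Set Ω} (hs : ∀ n, MeasurableSet (s n)) {ε : ℝ≥0∞}
    (hε : ∀ m, ε ≤ μ (⋃ k ≥ m, s k)) : ε ≤ μ (limsup s atTop) := by
  have hanti : Antitone fun m => ⋃ k ≥ m, s k := fun a b hab =>
    Set.biUnion_mono (fun k hk => hab.trans hk) fun _ _ => le_rfl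
  rw [limsup_eq_iInf_iSup_of_nat]
  simp only [Set.iInf_eq_iInter, Set.iSup_eq_iUnion]
  rw [hanti.measure_iInter (fun m => (MeasurableSet.biUnion (Set.to_countable _)
    fun k _ => hs k).nullMeasurableSet) ⟨0, measure_ne_top μ _⟩]
  exact le_iInf hε

section BoundedLocalCorrelation

variable {Ω : Type*} [MeasurableSpace Ω] {μ : Measure Ω} {A : ℕ → Set Ω} {c₁ c₂ : ℝ≥0∞}

def HasBoundedLocalCorrelation (μ : Measure Ω) (A : ℕ → Set Ω) (c₁ c₂ : ℝ≥0∞) : Prop :=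
  ∀ j : ℕ, ∃ S : Finset ℕ, (∑ i ∈ S, μ (A j ∩ A i)) ≤ c₁ * μ (A j) ∧
    ∀ k : ℕ, j + 1 ≤ k → k ∉ S → μ (A j ∩ A k) ≤ c₂ * μ (A j) * μ (A k)

theorem HasBoundedLocalCorrelation.sum_measure_inter_lt_le
    (h : HasBoundedLocalCorrelation μ A c₁ c₂) (t : Finset ℕ) (j : ℕ) :
    ∑ k ∈ t with j < k, μ (A j ∩ A k) ≤ c₁ * μ (A j) + c₂ * μ (A j) * ∑ k ∈ t, μ (A k) := by
  obtain ⟨S, hnear, hfar⟩ := h j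
  set Q := t.filter (j < ·)
  rw [← sum_inter_add_sum_sdiff Q S]
  gcongr
  · exact (sum_le_sum_of_subset inter_subset_right).trans hnear
  · calc ∑ k ∈ Q \ S, μ (A j ∩ A k) ≤ ∑ k ∈ Q \ S, c₂ * μ (A j) * μ (A k) :=
          sum_le_sum fun k hk => hfar k (mem_filter.mp (mem_sdiff.mp hk).1).2 (mem_sdiff.mp hk).2
      _ ≤ c₂ * μ (A j) * ∑ k ∈ t, μ (A k) := by
          rw [← mul_sum]
          gcongr
          exact sdiff_subset.trans (filter_subset _ _)

theorem HasBoundedLocalCorrelation.sum_sum_measure_inter_le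
    (h : HasBoundedLocalCorrelation μ A c₁ c₂) (t : Finset ℕ) :
    ∑ i ∈ t, ∑ j ∈ t, μ (A i ∩ A j) ≤
      (1 + 2 * c₁) * ∑ k ∈ t, μ (A k) + 2 * c₂ * (∑ k ∈ t, μ (A k)) ^ 2 := by
  set S := ∑ k ∈ t, μ (A k)
  rw [sum_sum_eq_sum_add_two_nsmul_sum_lt t fun i j => by rw [Set.inter_comm]]
  simp_rw [Set.inter_self, nsmul_eq_mul, Nat.cast_ofNat]
  calc S + 2 * ∑ i ∈ t, ∑ j ∈ t with i < j, μ (A i ∩ A j)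
      ≤ S + 2 * ∑ i ∈ t, (c₁ * μ (A i) + c₂ * μ (A i) * S) := by
        gcongr with i
        exact h.sum_measure_inter_lt_le t i
    _ = (1 + 2 * c₁) * S + 2 * c₂ * S ^ 2 := by
        rw [sum_add_distrib, ← mul_sum, ← sum_mul, ← mul_sum]
        ring

theorem HasBoundedLocalCorrelation.one_le_mul_measure_biUnion [IsFiniteMeasure μ]
    (hA : ∀ k, MeasurableSet (A k)) (h : HasBoundedLocalCorrelation μ A c₁ c₂) (t : Finset ℕ)
    (ht : 1 + 2 * c₁ ≤ c₂ * ∑ k ∈ t, μ (A k)) :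
    1 ≤ 3 * c₂ * μ (⋃ k ∈ t, A k) := by
  set S := ∑ k ∈ t, μ (A k)
  have hS : S ≠ 0 := by
    rintro hS
    simp [hS] at ht
  have hS' : S ≠ ∞ := ENNReal.sum_ne_top.mpr fun k _ => measure_ne_top μ _
  refine (ENNReal.mul_le_mul_iff_left (pow_ne_zero 2 hS) (ENNReal.pow_ne_top hS')).mp ?_
  calc 1 * S ^ 2 ≤ (∑ i ∈ t, ∑ j ∈ t, μ (A i ∩ A j)) * μ (⋃ k ∈ t, A k) := by
        rw [one_mul]
        exact sq_sum_measure_le_mul_measure_biUnion μ hA t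
    _ ≤ ((1 + 2 * c₁) * S + 2 * c₂ * S ^ 2) * μ (⋃ k ∈ t, A k) := by
        gcongr
        exact h.sum_sum_measure_inter_le t
    _ ≤ (c₂ * S * S + 2 * c₂ * S ^ 2) * μ (⋃ k ∈ t, A k) := by gcongr
    _ = 3 * c₂ * μ (⋃ k ∈ t, A k) * S ^ 2 := by ring

theorem HasBoundedLocalCorrelation.measure_limsup_pos [IsFiniteMeasure μ]
    (hA : ∀ k, MeasurableSet (A k)) (hsum : ∑' k, μ (A k) = ∞) (hc₁ : c₁ ≠ ∞) (hc₂ : c₂ ≠ 0)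
    (hc₂' : c₂ ≠ ∞) (h : HasBoundedLocalCorrelation μ A c₁ c₂) :
    0 < μ (limsup A atTop) := by
  have h3c₂ : 3 * c₂ ≠ ∞ := ENNReal.mul_ne_top (by norm_num) hc₂'
  refine lt_of_lt_of_le (ENNReal.inv_pos.mpr h3c₂) (le_measure_limsup_atTop hA fun m => ?_)
  have hb : (1 + 2 * c₁) / c₂ ≠ ∞ := ENNReal.div_ne_top (by finiteness) hc₂
  obtain ⟨n, hn⟩ := ENNReal.exists_le_sum_Ico_of_tsum_eq_top hsum (fun k => measure_ne_top μ _) m hb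
  have hunion := h.one_le_mul_measure_biUnion hA (Ico m n) <| by
    calc 1 + 2 * c₁ = c₂ * ((1 + 2 * c₁) / c₂) := (ENNReal.mul_div_cancel hc₂ hc₂').symm
      _ ≤ c₂ * ∑ k ∈ Ico m n, μ (A k) := by gcongr
  rw [ENNReal.inv_le_iff_le_mul (fun _ => mul_ne_zero three_ne_zero hc₂) (absurd · h3c₂)]
  refine hunion.trans (mul_le_mul_right (measure_mono ?_) _)
  exact Set.biUnion_subset_biUnion_left fun k hk => (mem_Ico.mp hk).1

end BoundedLocalCorrelation

/-- Lemma 5.3 of the paper: a generalized (Chung–Erdős type) second Borel–Cantelli lemma. -/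
theorem stmt14 {Ω : Type*} [MeasurableSpace Ω] (P : Measure Ω) [IsProbabilityMeasure P]
    (A : ℕ → Set Ω) (hA : ∀ k : ℕ, MeasurableSet (A k))
    (h1 : (∑' k : ℕ, P (A k)) = ⊤)
    (h2 : P (limsup A atTop) = 0 ∨ P (limsup A atTop) = 1)
    (h3 : ∃ c1 c2 : ℝ≥0∞, 0 < c1 ∧ c1 ≠ ⊤ ∧ 0 < c2 ∧ c2 ≠ ⊤ ∧
      ∀ j : ℕ, ∃ S : Finset ℕ,
        (∑ i ∈ S, P (A j ∩ A i)) ≤ c1 * P (A j) ∧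
        ∀ k : ℕ, j + 1 ≤ k → k ∉ S → P (A j ∩ A k) ≤ c2 * P (A j) * P (A k)) :
    P (limsup A atTop) = 1 := by
  obtain ⟨c1, c2, -, hc1, hc2, hc2', hloc⟩ := h3
  have hpos : 0 < P (limsup A atTop) :=
    HasBoundedLocalCorrelation.measure_limsup_pos hA h1 hc1 hc2.ne' hc2' hloc
  exact h2.resolve_left hpos.ne'
end
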